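/- arXiv:2510.26922 — 5 statements merged into one kernel-verified Lean document; each statement's English description precedes it below -/
import Mathlib

section
/- The equation ∑_{k=1}^∞ e^{-s √(k(k+2))} = 1 has a unique real solution s_0 > 0, and this solution satisfies 1.015 < 2 s_0 < 1.016. -/
/-!
With `m = k + 1` the terms are `e^{-s√(m² - 1)} = (e^{-s})^m · e^{s(m - √(m² - 1))}`. The series is
continuous and strictly decreasing in `s > 0`, so it suffices to show that it exceeds `1` at
`s = 0.5075` and is below `1` at `s = 0.508`. For this, `√(m² - 1)` is squeezed between a truncated
binomial series `U m` and `(m² - 1) / U m`, the factor `e^{s(m - √(m² - 1))}`, whose exponent lies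
in `[0, 1]`, between Taylor polynomials, and `e^{-s}` between rationals. The first 25 terms are then
summed exactly, and the rest is dominated by a geometric series.
-/

open Real Finset Set
open scoped Nat

/-- `m √(1 - 1/m²)` with its binomial series truncated after four terms; all omitted terms are
negative. -/
noncomputable def sqrtSqSubOneUpper (m : ℝ) : ℝ :=
  m - 1 / (2 * m) - 1 / (8 * m ^ 3) - 1 / (16 * m ^ 5)

section SqrtBounds

variable {m : ℝ}

lemma sqrtSqSubOneUpper_le_self (hm : 0 < m) : sqrtSqSubOneUpper m ≤ m := by
  unfold sqrtSqSubOneUpper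
  have : 0 ≤ 1 / (2 * m) + 1 / (8 * m ^ 3) + 1 / (16 * m ^ 5) := by positivity
  linarith

lemma sqrtSqSubOneUpper_pos (hm : 1 ≤ m) : 0 < sqrtSqSubOneUpper m := by
  have h1 : 1 / (2 * m) ≤ 1 / 2 := by gcongr; linarith
  have h3 : 1 / (8 * m ^ 3) ≤ 1 / 8 := by gcongr; nlinarith [one_le_pow₀ (n := 3) hm]
  have h5 : 1 / (16 * m ^ 5) ≤ 1 / 16 := by gcongr; nlinarith [one_le_pow₀ (n := 5) hm]
  unfold sqrtSqSubOneUpper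
  linarith

lemma sq_sqrtSqSubOneUpper (hm : m ≠ 0) :
    sqrtSqSubOneUpper m ^ 2 =
      m ^ 2 - 1 + (5 / (64 * m ^ 6) + 1 / (64 * m ^ 8) + 1 / (256 * m ^ 10)) := by
  unfold sqrtSqSubOneUpper
  field_simp
  ring

lemma sqrt_sq_sub_one_le_sqrtSqSubOneUpper (hm : 1 ≤ m) :
    √(m ^ 2 - 1) ≤ sqrtSqSubOneUpper m := by
  rw [sqrt_le_left (sqrtSqSubOneUpper_pos hm).le, sq_sqrtSqSubOneUpper (by positivity)]
  have : 0 ≤ 5 / (64 * m ^ 6) + 1 / (64 * m ^ 8) + 1 / (256 * m ^ 10) := by positivity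
  linarith

lemma div_sqrtSqSubOneUpper_le_sqrt (hm : 1 ≤ m) :
    (m ^ 2 - 1) / sqrtSqSubOneUpper m ≤ √(m ^ 2 - 1) := by
  have hC : 0 ≤ m ^ 2 - 1 := by nlinarith
  rw [div_le_iff₀ (sqrtSqSubOneUpper_pos hm)]
  calc m ^ 2 - 1 = √(m ^ 2 - 1) * √(m ^ 2 - 1) := (mul_self_sqrt hC).symm
    _ ≤ √(m ^ 2 - 1) * sqrtSqSubOneUpper m :=
      mul_le_mul_of_nonneg_left (sqrt_sq_sub_one_le_sqrtSqSubOneUpper hm) (sqrt_nonneg _)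

end SqrtBounds

noncomputable def expSqrtTerm (s : ℝ) (m : ℕ) : ℝ := exp (-s * √((m : ℝ) ^ 2 - 1))

noncomputable def expSqrtSeries (s : ℝ) : ℝ := ∑' n : ℕ, expSqrtTerm s (n + 2)

section Series

variable {s : ℝ}

lemma tsum_pnat_eq_expSqrtSeries (s : ℝ) :
    ∑' k : ℕ+, exp (-s * √((k : ℝ) * ((k : ℝ) + 2))) = expSqrtSeries s := by
  rw [tsum_pnat_eq_tsum_succ (f := fun k : ℕ ↦ exp (-s * √((k : ℝ) * ((k : ℝ) + 2))))]
  refine tsum_congr fun n ↦ ?_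
  simp only [expSqrtTerm]
  push_cast
  ring_nf

lemma expSqrtTerm_pos (s : ℝ) (m : ℕ) : 0 < expSqrtTerm s m := exp_pos _

lemma expSqrtTerm_eq (s : ℝ) (m : ℕ) :
    expSqrtTerm s m = exp (-s) ^ m * exp (s * (m - √((m : ℝ) ^ 2 - 1))) := by
  rw [expSqrtTerm, ← exp_nat_mul, ← exp_add]
  ring_nf

lemma expSqrtTerm_succ_le (hs : 0 ≤ s) (n : ℕ) : expSqrtTerm s (n + 1) ≤ exp (-s) ^ n := by
  rw [expSqrtTerm, ← exp_nat_mul, exp_le_exp]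
  have : (n : ℝ) ≤ √(((n + 1 : ℕ) : ℝ) ^ 2 - 1) :=
    le_sqrt_of_sq_le (by push_cast; nlinarith [n.cast_nonneg (α := ℝ)])
  nlinarith

lemma strictAnti_expSqrtTerm {m : ℕ} (hm : 2 ≤ m) : StrictAnti fun s ↦ expSqrtTerm s m := by
  have : 0 < √((m : ℝ) ^ 2 - 1) := sqrt_pos.2 (by nlinarith [(Nat.ofNat_le_cast (α := ℝ)).2 hm])
  intro s t hst
  simp only [expSqrtTerm, exp_lt_exp]
  nlinarith

lemma summable_geometric_exp_neg (hs : 0 < s) : Summable fun n : ℕ ↦ exp (-s) ^ (n + 1) :=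
  (summable_nat_add_iff 1).2 <|
    summable_geometric_of_lt_one (exp_pos _).le (exp_lt_one_iff.2 (by linarith))

lemma summable_expSqrtTerm (hs : 0 < s) : Summable fun n ↦ expSqrtTerm s (n + 2) :=
  .of_nonneg_of_le (fun _ ↦ (expSqrtTerm_pos s _).le) (fun n ↦ expSqrtTerm_succ_le hs.le (n + 1))
    (summable_geometric_exp_neg hs)

lemma strictAntiOn_expSqrtSeries : StrictAntiOn expSqrtSeries (Ioi 0) := fun s hs t ht hst ↦
  Summable.tsum_lt_tsum (i := 0)
    (fun n ↦ (strictAnti_expSqrtTerm (by omega)).antitone hst.le)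
    (strictAnti_expSqrtTerm le_rfl hst) (summable_expSqrtTerm ht) (summable_expSqrtTerm hs)

lemma continuousOn_expSqrtSeries {c : ℝ} (hc : 0 < c) : ContinuousOn expSqrtSeries (Ici c) := by
  refine continuousOn_tsum (fun n ↦ by unfold expSqrtTerm; fun_prop)
    (summable_geometric_exp_neg hc) fun n s hs ↦ ?_
  rw [norm_of_nonneg (expSqrtTerm_pos s _).le]
  exact ((strictAnti_expSqrtTerm (by omega)).antitone hs).trans (expSqrtTerm_succ_le hc.le _)

end Series

noncomputable def lowerTerm (s a : ℝ) (m : ℕ) : ℝ :=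
  a ^ m * ∑ i ∈ range 4, (s * (m - sqrtSqSubOneUpper m)) ^ i / (i !)

noncomputable def expUpperBound (t : ℝ) : ℝ := ∑ i ∈ range 4, t ^ i / (i !) + 5 / 96 * t ^ 4

noncomputable def upperTerm (s b : ℝ) (m : ℕ) : ℝ :=
  b ^ m * expUpperBound (s * (m - (m ^ 2 - 1) / sqrtSqSubOneUpper m))

lemma exp_le_expUpperBound {t : ℝ} (h0 : 0 ≤ t) (h1 : t ≤ 1) : exp t ≤ expUpperBound t := by
  convert exp_bound' h0 h1 (n := 4) (by norm_num) using 1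
  norm_num [expUpperBound]
  ring

section TermBounds

variable {s : ℝ} {m : ℕ}

lemma lowerTerm_le_expSqrtTerm {a : ℝ} (hs : 0 ≤ s) (ha : 0 ≤ a) (has : a ≤ exp (-s))
    (hm : 1 ≤ m) : lowerTerm s a m ≤ expSqrtTerm s m := by
  have hm' : (1 : ℝ) ≤ m := by exact_mod_cast hm
  have ht : 0 ≤ s * (m - sqrtSqSubOneUpper m) :=
    mul_nonneg hs (sub_nonneg.2 (sqrtSqSubOneUpper_le_self (by linarith)))
  rw [lowerTerm, expSqrtTerm_eq]
  refine mul_le_mul (pow_le_pow_left₀ ha has m) ?_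
    (sum_nonneg fun i _ ↦ by positivity) (by positivity)
  calc ∑ i ∈ range 4, (s * (m - sqrtSqSubOneUpper m)) ^ i / (i !)
      ≤ exp (s * (m - sqrtSqSubOneUpper m)) := sum_le_exp_of_nonneg ht 4
    _ ≤ exp (s * (m - √((m : ℝ) ^ 2 - 1))) := by
      gcongr
      exact sqrt_sq_sub_one_le_sqrtSqSubOneUpper hm'

lemma expSqrtTerm_le_upperTerm {b : ℝ} (hs : 0 ≤ s) (hs1 : s ≤ 1) (hb : exp (-s) ≤ b)
    (hm : 1 ≤ m) : expSqrtTerm s m ≤ upperTerm s b m := by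
  have hm' : (1 : ℝ) ≤ m := by exact_mod_cast hm
  set U := sqrtSqSubOneUpper m
  have hU : 0 < U := sqrtSqSubOneUpper_pos hm'
  have hsqrt : √((m : ℝ) ^ 2 - 1) ≤ m := sqrt_le_left (by linarith) |>.2 (by linarith)
  have hδ0 : 0 ≤ m - (m ^ 2 - 1) / U :=
    sub_nonneg.2 ((div_sqrtSqSubOneUpper_le_sqrt hm').trans hsqrt)
  have hδ1 : m - (m ^ 2 - 1) / U ≤ 1 := by
    have hU_le : ((m : ℝ) ^ 2 - 1) / m ≤ (m ^ 2 - 1) / U :=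
      div_le_div_of_nonneg_left (by nlinarith) hU (sqrtSqSubOneUpper_le_self (by linarith))
    have hm_le : (m : ℝ) - 1 ≤ (m ^ 2 - 1) / m := by rw [le_div_iff₀ (by linarith)]; nlinarith
    linarith
  rw [upperTerm, expSqrtTerm_eq]
  refine mul_le_mul (pow_le_pow_left₀ (exp_pos _).le hb m) ?_ (exp_pos _).le
    (pow_nonneg ((exp_pos _).le.trans hb) m)
  calc exp (s * (m - √((m : ℝ) ^ 2 - 1))) ≤ exp (s * (m - (m ^ 2 - 1) / U)) := by
        gcongr
        exact div_sqrtSqSubOneUpper_le_sqrt hm'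
    _ ≤ expUpperBound (s * (m - (m ^ 2 - 1) / U)) :=
        exp_le_expUpperBound (mul_nonneg hs hδ0) (mul_le_one₀ hs1 hδ0 hδ1)

end TermBounds

section SeriesBounds

variable {s : ℝ}

lemma sum_lowerTerm_le_expSqrtSeries {a : ℝ} (hs : 0 < s) (ha : 0 ≤ a) (has : a ≤ exp (-s))
    (N : ℕ) : ∑ n ∈ range N, lowerTerm s a (n + 2) ≤ expSqrtSeries s :=
  (sum_le_sum fun n _ ↦ lowerTerm_le_expSqrtTerm hs.le ha has (by omega)).trans <|
    (summable_expSqrtTerm hs).sum_le_tsum _ fun n _ ↦ (expSqrtTerm_pos s _).le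

lemma expSqrtSeries_le_sum_upperTerm_add {b : ℝ} (hs : 0 < s) (hs1 : s ≤ 1) (hb : exp (-s) ≤ b)
    (hb1 : b < 1) (N : ℕ) :
    expSqrtSeries s ≤ ∑ n ∈ range N, upperTerm s b (n + 2) + b ^ (N + 1) / (1 - b) := by
  have hb0 : 0 ≤ b := (exp_pos _).le.trans hb
  rw [expSqrtSeries, ← (summable_expSqrtTerm hs).sum_add_tsum_nat_add N]
  gcongr with n
  · exact expSqrtTerm_le_upperTerm hs.le hs1 hb (by omega)
  · calc ∑' n, expSqrtTerm s (n + N + 2)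
        ≤ ∑' n : ℕ, b ^ (N + 1) * b ^ n := by
          refine (summable_nat_add_iff N).2 (summable_expSqrtTerm hs) |>.tsum_le_tsum (fun n ↦ ?_)
            ((summable_geometric_of_lt_one hb0 hb1).mul_left _)
          calc expSqrtTerm s (n + N + 2) ≤ exp (-s) ^ (n + N + 1) := expSqrtTerm_succ_le hs.le _
            _ ≤ b ^ (n + N + 1) := pow_le_pow_left₀ (exp_pos _).le hb _
            _ = b ^ (N + 1) * b ^ n := by ring
      _ = b ^ (N + 1) / (1 - b) := by
          rw [tsum_mul_left, tsum_geometric_of_lt_one hb0 hb1, div_eq_mul_inv]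

end SeriesBounds

lemma exp_neg_05075_ge : (0.60199 : ℝ) ≤ exp (-0.5075) := by
  rw [exp_neg, le_inv_comm₀ (by norm_num) (exp_pos _)]
  refine (exp_bound' (by norm_num) (by norm_num) (n := 8) (by norm_num)).trans ?_
  norm_num [sum_range_succ, Nat.factorial]

lemma exp_neg_0508_le : exp (-0.508) ≤ (0.6017 : ℝ) := by
  rw [exp_neg, inv_le_comm₀ (exp_pos _) (by norm_num)]
  refine le_trans ?_ (sum_le_exp_of_nonneg (by norm_num) 8)
  norm_num [sum_range_succ, Nat.factorial]

lemma one_lt_expSqrtSeries : 1 < expSqrtSeries 0.5075 := by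
  refine lt_of_lt_of_le ?_
    (sum_lowerTerm_le_expSqrtSeries (by norm_num) (by norm_num) exp_neg_05075_ge 25)
  norm_num [lowerTerm, sqrtSqSubOneUpper, sum_range_succ, Nat.factorial]

lemma expSqrtSeries_lt_one : expSqrtSeries 0.508 < 1 := by
  refine lt_of_le_of_lt (expSqrtSeries_le_sum_upperTerm_add (by norm_num) (by norm_num)
    exp_neg_0508_le (by norm_num) 25) ?_
  norm_num [upperTerm, expUpperBound, sqrtSqSubOneUpper, sum_range_succ, Nat.factorial]

/-- The equation ∑_{k≥1} e^{-s√(k(k+2))} = 1 has a unique positive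
solution s₀, and 1.015 < 2 s₀ < 1.016. -/
theorem stmt4 :
    ∃ s₀ : ℝ, 0 < s₀ ∧
      (∑' k : ℕ+, Real.exp (-s₀ * Real.sqrt ((k : ℝ) * ((k : ℝ) + 2))) = 1) ∧
      (∀ s : ℝ, 0 < s →
        (∑' k : ℕ+, Real.exp (-s * Real.sqrt ((k : ℝ) * ((k : ℝ) + 2))) = 1) → s = s₀) ∧
      1.015 < 2 * s₀ ∧ 2 * s₀ < 1.016 := by
  simp only [tsum_pnat_eq_expSqrtSeries]
  obtain ⟨s₀, ⟨hlo, hhi⟩, hs₀⟩ := intermediate_value_Ioo' (by norm_num : (0.5075 : ℝ) ≤ 0.508)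
    ((continuousOn_expSqrtSeries (by norm_num)).mono Icc_subset_Ici_self)
    ⟨expSqrtSeries_lt_one, one_lt_expSqrtSeries⟩
  have hpos : 0 < s₀ := by linarith
  exact ⟨s₀, hpos, hs₀, fun s hs h ↦ strictAntiOn_expSqrtSeries.injOn hs hpos (h.trans hs₀.symm),
    by linarith, by linarith⟩
end

section
/- The equation ∑_{k=1}^∞ (k+1) e^{-s √((k+1)² - 1)} = 1 has a unique real solution s_0 > 0, and s_0/π lies strictly between 0.274 and 0.275. -/
/-!
The series is continuous and strictly decreasing in `s > 0`, so by the intermediate value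
theorem it suffices to show that it exceeds `1` at `0.8608 ≥ 0.274π` and is below `1` at
`0.8639 ≤ 0.275π`. For the numerics, the `m`-th term is `m e^{-sm} e^{s/(m + √(m²-1))}`: the
first factor needs a single rational bound on `e^{-s}`, the second has a small exponent and is
bounded by Taylor polynomials once `√(m²-1)` is squeezed between two Heron iterates `u` (started
at `m`) and `(m²-1)/u`. Twelve terms suffice, the remainder being dominated by a geometric series.
-/

open Real Finset Set

namespace SqrtExpSeries

noncomputable def heron (a b : ℝ) : ℝ := (b + a / b) / 2

theorem heron_pos {a b : ℝ} (ha : 0 ≤ a) (hb : 0 < b) : 0 < heron a b := by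
  unfold heron; positivity

theorem sqrt_le_heron {a b : ℝ} (ha : 0 ≤ a) (hb : 0 < b) : √a ≤ heron a b := by
  have hsq : (b - √a) ^ 2 / b = b + a / b - 2 * √a := by
    field_simp
    rw [sub_sq, sq_sqrt ha]
    ring
  have := div_nonneg (sq_nonneg (b - √a)) hb.le
  unfold heron
  linarith

theorem div_le_sqrt_of_sqrt_le {a u : ℝ} (ha : 0 ≤ a) (h : √a ≤ u) : a / u ≤ √a := by
  rcases ((sqrt_nonneg a).trans h).eq_or_lt with hu | hu
  · rw [← hu, div_zero]
    exact sqrt_nonneg a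
  · rw [div_le_iff₀ hu]
    calc a = √a * √a := (mul_self_sqrt ha).symm
      _ ≤ √a * u := mul_le_mul_of_nonneg_left h (sqrt_nonneg a)

theorem inv_le_exp_neg {x : ℝ} (h0 : 0 ≤ x) (h1 : x ≤ 1) {n : ℕ} (hn : 0 < n) :
    (∑ i ∈ range n, x ^ i / i.factorial + x ^ n * (n + 1) / (n.factorial * n))⁻¹ ≤
      exp (-x) := by
  rw [exp_neg]
  exact inv_anti₀ (exp_pos x) (exp_bound' h0 h1 hn)

theorem exp_neg_le_inv {x : ℝ} (h0 : 0 ≤ x) (n : ℕ) :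
    exp (-x) ≤ (∑ i ∈ range (n + 1), x ^ i / i.factorial)⁻¹ := by
  have hpos : 0 < ∑ i ∈ range (n + 1), x ^ i / i.factorial := by
    rw [sum_range_succ']
    simp only [pow_zero, Nat.factorial_zero, Nat.cast_one, div_one]
    positivity
  rw [exp_neg]
  exact inv_anti₀ hpos (sum_le_exp_of_nonneg h0 _)

theorem natCast_add_le_mul_pow (j N : ℕ) :
    ((j + N + 2 : ℕ) : ℝ) ≤ (N + 2) * ((N + 3) / (N + 2)) ^ j := by
  have hN : (0 : ℝ) < N + 2 := by positivity
  have h := one_add_mul_le_pow (a := 1 / ((N : ℝ) + 2)) (by rw [le_div_iff₀ hN]; nlinarith) j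
  rw [show 1 + 1 / ((N : ℝ) + 2) = (N + 3) / (N + 2) by field_simp; ring] at h
  calc ((j + N + 2 : ℕ) : ℝ) = (N + 2) * (1 + j * (1 / (N + 2))) := by
        field_simp; push_cast; ring
    _ ≤ _ := mul_le_mul_of_nonneg_left h hN.le

theorem summable_natCast_add_two_mul_pow {x : ℝ} (hx0 : 0 ≤ x) (hx1 : x < 1) :
    Summable fun n : ℕ => ((n + 2 : ℕ) : ℝ) * x ^ (n + 1) := by
  have h : Summable fun n : ℕ => ((n : ℝ) + 1) * x ^ n :=
    ((summable_pow_mul_geometric_of_norm_lt_one 1 (by rwa [norm_of_nonneg hx0])).add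
      (summable_geometric_of_lt_one hx0 hx1)).congr fun n => by ring
  exact ((summable_nat_add_iff 1).mpr h).congr fun n => by push_cast; ring

theorem exists_unique_eq_of_strictAntiOn {f : ℝ → ℝ} {S : Set ℝ} {a b c : ℝ}
    (hf : StrictAntiOn f S) (hab : a ≤ b) (hS : Icc a b ⊆ S) (hcont : ContinuousOn f (Icc a b))
    (hfa : c < f a) (hfb : f b < c) :
    ∃ x ∈ Ioo a b, f x = c ∧ ∀ y ∈ S, f y = c → y = x := by
  obtain ⟨x, hx, hfx⟩ := intermediate_value_Icc' hab hcont ⟨hfb.le, hfa.le⟩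
  refine ⟨x, ⟨hx.1.lt_of_ne ?_, hx.2.lt_of_ne ?_⟩, hfx,
    fun y hy hfy => hf.injOn hy (hS hx) ?_⟩
  · rintro rfl; exact hfa.ne' hfx
  · rintro rfl; exact hfb.ne hfx
  · rw [hfy, hfx]

noncomputable def term (s : ℝ) (m : ℕ) : ℝ := m * exp (-s * √((m : ℝ) ^ 2 - 1))

noncomputable def series (s : ℝ) : ℝ := ∑' n : ℕ, term s (n + 2)

theorem tsum_pnat_eq_series (s : ℝ) :
    ∑' k : ℕ+, ((k : ℝ) + 1) * exp (-s * √(((k : ℝ) + 1) ^ 2 - 1)) = series s := by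
  rw [tsum_pnat_eq_tsum_succ
    (f := fun k : ℕ => ((k : ℝ) + 1) * exp (-s * √(((k : ℝ) + 1) ^ 2 - 1)))]
  unfold series term
  push_cast
  ring_nf

theorem sub_sqrt_sq_sub_one {m : ℝ} (hm : 1 ≤ m) :
    m - √(m ^ 2 - 1) = 1 / (m + √(m ^ 2 - 1)) := by
  have hpos : 0 < m + √(m ^ 2 - 1) := by positivity
  have hsq := sq_sqrt (show 0 ≤ m ^ 2 - 1 by nlinarith)
  rw [eq_div_iff hpos.ne']
  linear_combination -hsq

theorem term_eq (s : ℝ) {m : ℕ} (hm : 1 ≤ m) :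
    term s m = m * exp (-s) ^ m * exp (s / (m + √((m : ℝ) ^ 2 - 1))) := by
  have h := sub_sqrt_sq_sub_one (m := (m : ℝ)) (by exact_mod_cast hm)
  rw [term, mul_assoc, ← exp_nat_mul, ← exp_add, div_eq_mul_one_div s, ← h]
  ring_nf

theorem term_nonneg (s : ℝ) (m : ℕ) : 0 ≤ term s m := by
  unfold term; positivity

theorem term_le_term {s t : ℝ} (hst : s ≤ t) (m : ℕ) : term t m ≤ term s m := by
  unfold term
  gcongr

theorem term_lt_term {s t : ℝ} (hst : s < t) {m : ℕ} (hm : 2 ≤ m) : term t m < term s m := by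
  have hm' : (2 : ℝ) ≤ m := by exact_mod_cast hm
  have hsqrt : 0 < √((m : ℝ) ^ 2 - 1) := sqrt_pos.mpr (by nlinarith)
  unfold term
  gcongr

theorem term_succ_le {s : ℝ} (hs : 0 ≤ s) (k : ℕ) :
    term s (k + 1) ≤ (k + 1 : ℕ) * exp (-s) ^ k := by
  have hk0 : (0 : ℝ) ≤ k := k.cast_nonneg
  have hk : (k : ℝ) ≤ √(((k + 1 : ℕ) : ℝ) ^ 2 - 1) :=
    (le_sqrt hk0 (by push_cast; nlinarith)).mpr (by push_cast; nlinarith)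
  rw [term, ← exp_nat_mul]
  refine mul_le_mul_of_nonneg_left (exp_le_exp.mpr ?_) (by positivity)
  nlinarith

theorem term_add_two_le {s : ℝ} (hs : 0 ≤ s) (n : ℕ) :
    term s (n + 2) ≤ ((n + 2 : ℕ) : ℝ) * exp (-s) ^ (n + 1) :=
  term_succ_le hs (n + 1)

theorem summable_term {s : ℝ} (hs : 0 < s) : Summable fun n => term s (n + 2) :=
  (summable_natCast_add_two_mul_pow (exp_nonneg _) (exp_lt_one_iff.mpr (by linarith)))
    |>.of_nonneg_of_le (fun n => term_nonneg s _) (term_add_two_le hs.le)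

theorem continuousOn_series {a : ℝ} (ha : 0 < a) : ContinuousOn series (Ici a) := by
  refine continuousOn_tsum (fun n => ?_)
    (summable_natCast_add_two_mul_pow (exp_nonneg (-a)) (exp_lt_one_iff.mpr (by linarith)))
    fun n s hs => ?_
  · unfold term
    fun_prop
  · rw [norm_of_nonneg (term_nonneg s _)]
    refine (term_add_two_le (ha.le.trans hs) n).trans ?_
    gcongr
    exact hs

theorem strictAntiOn_series : StrictAntiOn series (Ioi 0) := fun _ hs t _ hst =>
  Summable.tsum_lt_tsum_of_nonneg (i := 0) (fun n => term_nonneg t (n + 2))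
    (fun n => term_le_term hst.le (n + 2)) (term_lt_term hst le_rfl) (summable_term hs)

theorem tsum_term_tail_le {s q : ℝ} (hs : 0 < s) (hq : exp (-s) ≤ q) (N : ℕ)
    (hρ : q * (N + 3) / (N + 2) < 1) :
    ∑' j, term s (j + N + 2) ≤ (N + 2) * q ^ (N + 1) / (1 - q * (N + 3) / (N + 2)) := by
  have hq0 : 0 ≤ q := (exp_nonneg _).trans hq
  have hρ0 : 0 ≤ q * (N + 3) / (N + 2) := by positivity
  have hsum_tail : Summable fun j => term s (j + N + 2) :=
    (summable_nat_add_iff (f := fun n => term s (n + 2)) N).mpr (summable_term hs)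
  have hbound (j : ℕ) :
      term s (j + N + 2) ≤ (N + 2) * q ^ (N + 1) * (q * (N + 3) / (N + 2)) ^ j :=
    calc term s (j + N + 2) ≤ ((j + N + 2 : ℕ) : ℝ) * exp (-s) ^ (j + N + 1) :=
          term_succ_le hs.le (j + N + 1)
      _ ≤ ((N + 2) * ((N + 3) / (N + 2)) ^ j) * q ^ (j + N + 1) := by
          gcongr
          exact natCast_add_le_mul_pow j N
      _ = (N + 2) * q ^ (N + 1) * (q * (N + 3) / (N + 2)) ^ j := by
          rw [mul_div_assoc, mul_pow]; ring
  calc ∑' j, term s (j + N + 2)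
      ≤ ∑' j : ℕ, (N + 2) * q ^ (N + 1) * (q * (N + 3) / (N + 2)) ^ j :=
        hsum_tail.tsum_le_tsum hbound ((summable_geometric_of_lt_one hρ0 hρ).mul_left _)
    _ = _ := by rw [tsum_mul_left, tsum_geometric_of_lt_one hρ0 hρ, ← div_eq_mul_inv]

noncomputable def sqrtUpper (m : ℕ) : ℝ :=
  heron ((m : ℝ) ^ 2 - 1) (heron ((m : ℝ) ^ 2 - 1) m)

theorem sq_sub_one_nonneg {m : ℕ} (hm : 1 ≤ m) : 0 ≤ (m : ℝ) ^ 2 - 1 := by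
  have : (1 : ℝ) ≤ m := by exact_mod_cast hm
  nlinarith

theorem sqrtUpper_pos {m : ℕ} (hm : 1 ≤ m) : 0 < sqrtUpper m :=
  heron_pos (sq_sub_one_nonneg hm) (heron_pos (sq_sub_one_nonneg hm) (by positivity))

theorem sqrt_le_sqrtUpper {m : ℕ} (hm : 1 ≤ m) : √((m : ℝ) ^ 2 - 1) ≤ sqrtUpper m :=
  sqrt_le_heron (sq_sub_one_nonneg hm) (heron_pos (sq_sub_one_nonneg hm) (by positivity))

noncomputable def lowerTerm (d : ℕ) (s q : ℝ) (m : ℕ) : ℝ :=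
  m * q ^ m * ∑ i ∈ range d, (s / (m + sqrtUpper m)) ^ i / i.factorial

noncomputable def upperTerm (d : ℕ) (s q : ℝ) (m : ℕ) : ℝ :=
  let y : ℝ := s / (m + ((m : ℝ) ^ 2 - 1) / sqrtUpper m)
  m * q ^ m * (∑ i ∈ range d, y ^ i / i.factorial + y ^ d * (d + 1) / (d.factorial * d : ℝ))

theorem lowerTerm_le_term (d : ℕ) {s q : ℝ} (hs : 0 ≤ s) (hq0 : 0 ≤ q) (hq : q ≤ exp (-s))
    {m : ℕ} (hm : 1 ≤ m) : lowerTerm d s q m ≤ term s m := by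
  have hu := sqrt_le_sqrtUpper hm
  have hy0 : 0 ≤ s / (m + sqrtUpper m) := div_nonneg hs (by linarith [sqrtUpper_pos hm])
  rw [term_eq s hm, lowerTerm]
  refine mul_le_mul (by gcongr) ?_ (sum_nonneg fun i _ => by positivity) (by positivity)
  calc ∑ i ∈ range d, (s / (m + sqrtUpper m)) ^ i / i.factorial
      ≤ exp (s / (m + sqrtUpper m)) := sum_le_exp_of_nonneg hy0 d
    _ ≤ exp (s / (m + √((m : ℝ) ^ 2 - 1))) := by gcongr

theorem term_le_upperTerm {d : ℕ} (hd : 0 < d) {s q : ℝ} (hs0 : 0 ≤ s) (hs1 : s ≤ 1)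
    (hq : exp (-s) ≤ q) {m : ℕ} (hm : 1 ≤ m) : term s m ≤ upperTerm d s q m := by
  have hm1 : (1 : ℝ) ≤ m := by exact_mod_cast hm
  have ha := sq_sub_one_nonneg hm
  have hl := div_le_sqrt_of_sqrt_le ha (sqrt_le_sqrtUpper hm)
  have hl0 : 0 ≤ ((m : ℝ) ^ 2 - 1) / sqrtUpper m := div_nonneg ha (sqrtUpper_pos hm).le
  have hy0 : 0 ≤ s / (m + ((m : ℝ) ^ 2 - 1) / sqrtUpper m) := div_nonneg hs0 (by linarith)
  have hy1 : s / (m + ((m : ℝ) ^ 2 - 1) / sqrtUpper m) ≤ 1 :=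
    (div_le_one (by linarith)).mpr (by linarith)
  have hq0 : 0 ≤ q := (exp_nonneg _).trans hq
  rw [term_eq s hm, upperTerm]
  refine mul_le_mul (by gcongr) ?_ (by positivity) (mul_nonneg m.cast_nonneg (pow_nonneg hq0 m))
  calc exp (s / (m + √((m : ℝ) ^ 2 - 1)))
      ≤ exp (s / (m + ((m : ℝ) ^ 2 - 1) / sqrtUpper m)) := by gcongr
    _ ≤ _ := exp_bound' hy0 hy1 hd

theorem one_lt_series : 1 < series 0.8608 := by
  have hq : (0.422823 : ℝ) ≤ exp (-0.8608) :=
    le_trans (by norm_num [sum_range_succ, Nat.factorial])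
      (inv_le_exp_neg (x := 0.8608) (by norm_num) (by norm_num) (n := 12) (by norm_num))
  calc (1 : ℝ) < ∑ n ∈ range 12, lowerTerm 4 0.8608 0.422823 (n + 2) := by
        simp only [lowerTerm, sqrtUpper, heron, sum_range_succ, sum_range_zero]
        norm_num [Nat.factorial]
    _ ≤ ∑ n ∈ range 12, term 0.8608 (n + 2) :=
        sum_le_sum fun n _ => lowerTerm_le_term 4 (by norm_num) (by norm_num) hq (by omega)
    _ ≤ series 0.8608 := (summable_term (by norm_num)).sum_le_tsum _ fun n _ => term_nonneg _ _

theorem series_lt_one : series 0.8639 < 1 := by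
  have hq : exp (-0.8639) ≤ (0.421515 : ℝ) :=
    (exp_neg_le_inv (x := 0.8639) (by norm_num) 11).trans
      (by norm_num [sum_range_succ, Nat.factorial])
  rw [series, ← (summable_term (by norm_num)).sum_add_tsum_nat_add 12]
  refine (add_le_add
    (sum_le_sum fun n _ => term_le_upperTerm (d := 4) (by norm_num) (by norm_num) (by norm_num) hq
      (by omega))
    (tsum_term_tail_le (by norm_num) hq 12 (by norm_num))).trans_lt ?_
  simp only [upperTerm, sqrtUpper, heron, sum_range_succ, sum_range_zero]
  norm_num [Nat.factorial]

end SqrtExpSeries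

open SqrtExpSeries

/-- The equation ∑_{k≥1} (k+1) e^{-s√((k+1)²-1)} = 1 has a unique
positive solution s₀, and 0.274 < s₀/π < 0.275. -/
theorem stmt5 :
    ∃ s₀ : ℝ, 0 < s₀ ∧
      (∑' k : ℕ+, ((k : ℝ) + 1) * Real.exp (-s₀ * Real.sqrt (((k : ℝ) + 1) ^ 2 - 1)) = 1) ∧
      (∀ s : ℝ, 0 < s →
        (∑' k : ℕ+, ((k : ℝ) + 1) * Real.exp (-s * Real.sqrt (((k : ℝ) + 1) ^ 2 - 1)) = 1) →
        s = s₀) ∧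
      0.274 < s₀ / Real.pi ∧ s₀ / Real.pi < 0.275 := by
  have hπ := pi_pos
  have ha : 0 < 0.274 * π := by positivity
  have hlo : 0.274 * π ≤ 0.8608 := by linarith [pi_lt_d4]
  have hhi : 0.8639 ≤ 0.275 * π := by linarith [pi_gt_d4]
  have h_one_lt : 1 < series (0.274 * π) :=
    one_lt_series.trans_le (strictAntiOn_series.antitoneOn ha (by norm_num) hlo)
  have h_lt_one : series (0.275 * π) < 1 :=
    (strictAntiOn_series.antitoneOn (by norm_num) (mem_Ioi.mpr (by positivity)) hhi).trans_lt
      series_lt_one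
  obtain ⟨s₀, ⟨h₁, h₂⟩, hroot, huniq⟩ :=
    exists_unique_eq_of_strictAntiOn strictAntiOn_series (by linarith)
      (fun s hs => ha.trans_le hs.1) ((continuousOn_series ha).mono Icc_subset_Ici_self)
      h_one_lt h_lt_one
  refine ⟨s₀, ha.trans h₁, (tsum_pnat_eq_series s₀).trans hroot,
    fun s hs h => huniq s hs ((tsum_pnat_eq_series s).symm.trans h),
    (lt_div_iff₀ hπ).mpr h₁, (div_lt_iff₀ hπ).mpr h₂⟩
end

section
/- Let H be a finite-dimensional Hilbert space of dimension d and let I, F be the identity and swap operators on H ⊗ H (F(ψ ⊗ φ) = φ ⊗ ψ). Then the Haar average of |ψ⟩⟨ψ| ⊗ |ψ⟩⟨ψ| over unit vectors ψ ∈ H equals (I + F)/(d + d²). -/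
open MeasureTheory Finset

namespace Stmt11

variable {d : ℕ} {μ : Measure (Fin d → ℂ)} [IsProbabilityMeasure μ]

lemma ae_sphere (hsphere : μ {ψ | ∑ x, ‖ψ x‖ ^ 2 = 1} = 1) :
    ∀ᵐ ψ ∂μ, ∑ x, ‖ψ x‖ ^ 2 = 1 := by
  have hS : MeasurableSet {ψ : Fin d → ℂ | ∑ x, ‖ψ x‖ ^ 2 = 1} := by
    have : Continuous fun ψ : Fin d → ℂ => ∑ x, ‖ψ x‖ ^ 2 := by fun_prop
    exact (isClosed_eq this continuous_const).measurableSet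
  have : μ {ψ : Fin d → ℂ | ∑ x, ‖ψ x‖ ^ 2 = 1}ᶜ = 0 := by
    rw [measure_compl hS (measure_ne_top _ _), hsphere, measure_univ]
    simp
  exact (ae_iff.2 this)

lemma mono_cont (u v w x : Fin d) :
    Continuous fun ψ : Fin d → ℂ =>
      (ψ u * (starRingEnd ℂ) (ψ v)) * (ψ w * (starRingEnd ℂ) (ψ x)) := by
  have hc : Continuous (starRingEnd ℂ) := Complex.continuous_conj
  exact ((continuous_apply u).mul (hc.comp (continuous_apply v))).mul
    ((continuous_apply w).mul (hc.comp (continuous_apply x)))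

lemma mono_integrable (hsphere : μ {ψ | ∑ x, ‖ψ x‖ ^ 2 = 1} = 1) (u v w x : Fin d) :
    Integrable (fun ψ : Fin d → ℂ =>
      (ψ u * (starRingEnd ℂ) (ψ v)) * (ψ w * (starRingEnd ℂ) (ψ x))) μ := by
  refine (integrable_const (1:ℝ)).mono' (mono_cont u v w x).aestronglyMeasurable ?_
  filter_upwards [ae_sphere hsphere] with ψ hψ
  have hb : ∀ t : Fin d, ‖ψ t‖ ≤ 1 := by
    intro t
    have h1 : ‖ψ t‖ ^ 2 ≤ 1 := by
      rw [← hψ]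
      exact Finset.single_le_sum (f := fun x => ‖ψ x‖^2) (fun i _ => by positivity) (mem_univ t)
    nlinarith [norm_nonneg (ψ t)]
  simp only [norm_mul, RCLike.norm_conj]
  calc ‖ψ u‖ * ‖ψ v‖ * (‖ψ w‖ * ‖ψ x‖) ≤ 1 * 1 * (1 * 1) := by
        gcongr <;> first | exact hb _ | positivity
    _ = 1 := by norm_num

lemma inv_int (hinv : ∀ U ∈ Matrix.unitaryGroup (Fin d) ℂ,
      Measure.map (fun ψ => U.mulVec ψ) μ = μ)
    {U : Matrix (Fin d) (Fin d) ℂ} (hU : U ∈ Matrix.unitaryGroup (Fin d) ℂ)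
    (f : (Fin d → ℂ) → ℂ) (hf : Continuous f) :
    ∫ ψ, f (U.mulVec ψ) ∂μ = ∫ ψ, f ψ ∂μ := by
  have hm : AEMeasurable (fun ψ : Fin d → ℂ => U.mulVec ψ) μ :=
    (LinearMap.continuous_of_finiteDimensional (Matrix.mulVecLin U)).measurable.aemeasurable
  conv_rhs => rw [← hinv U hU]
  rw [integral_map hm]
  exact hf.aestronglyMeasurable


noncomputable def T (μ : Measure (Fin d → ℂ)) (i j k l : Fin d) : ℂ :=
  ∫ ψ, (ψ i * (starRingEnd ℂ) (ψ j)) * (ψ k * (starRingEnd ℂ) (ψ l)) ∂μ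

lemma T_perm (hinv : ∀ U ∈ Matrix.unitaryGroup (Fin d) ℂ,
      Measure.map (fun ψ => U.mulVec ψ) μ = μ)
    (σ : Equiv.Perm (Fin d)) (i j k l : Fin d) :
    T μ (σ i) (σ j) (σ k) (σ l) = T μ i j k l := by
  classical
  set P : Matrix (Fin d) (Fin d) ℂ := Matrix.of fun a b => if b = σ a then 1 else 0 with hPdef
  have hP : P ∈ Matrix.unitaryGroup (Fin d) ℂ := by
    rw [Matrix.mem_unitaryGroup_iff]
    ext a b
    simp only [Matrix.mul_apply, Matrix.star_apply, hPdef, Matrix.of_apply, Matrix.one_apply]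
    simp only [apply_ite (star : ℂ → ℂ), star_one, star_zero, ite_mul, one_mul, zero_mul]
    rw [Finset.sum_ite_eq' Finset.univ (σ a) (fun c => if c = σ b then (1:ℂ) else 0)]
    simp [EmbeddingLike.apply_eq_iff_eq]
  have hmv : ∀ ψ : Fin d → ℂ, P.mulVec ψ = fun a => ψ (σ a) := by
    intro ψ; funext a
    simp only [Matrix.mulVec, dotProduct, hPdef, Matrix.of_apply, ite_mul, one_mul,
      zero_mul]
    rw [Finset.sum_ite_eq' Finset.univ (σ a) ψ]
    simp
  have h := inv_int hinv hP
    (fun ψ => (ψ i * (starRingEnd ℂ) (ψ j)) * (ψ k * (starRingEnd ℂ) (ψ l)))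
    (mono_cont i j k l)
  simp only [hmv] at h
  simpa [T] using h

lemma T_phase (hinv : ∀ U ∈ Matrix.unitaryGroup (Fin d) ℂ,
      Measure.map (fun ψ => U.mulVec ψ) μ = μ)
    (t i j k l : Fin d)
    (h : ((if i = t then 1 else 0) + (if k = t then 1 else 0) : ℕ)
       ≠ (if j = t then 1 else 0) + (if l = t then 1 else 0)) :
    T μ i j k l = 0 := by
  classical
  set e : Fin d → ℂ := fun a => if a = t then Complex.I else 1 with he
  have hee : ∀ a, e a * star (e a) = 1 := by
    intro a; by_cases ha : a = t <;> simp [he, ha, Complex.conj_I, Complex.I_mul_I]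
  have hD : Matrix.diagonal e ∈ Matrix.unitaryGroup (Fin d) ℂ := by
    rw [Matrix.mem_unitaryGroup_iff, Matrix.star_eq_conjTranspose,
      Matrix.diagonal_conjTranspose, Matrix.diagonal_mul_diagonal, ← Matrix.diagonal_one]
    refine congrArg Matrix.diagonal (funext fun a => ?_)
    simpa [Pi.star_apply] using hee a
  have h2 := inv_int hinv hD
    (fun ψ => (ψ i * (starRingEnd ℂ) (ψ j)) * (ψ k * (starRingEnd ℂ) (ψ l)))
    (mono_cont i j k l)
  simp only [Matrix.mulVec_diagonal] at h2
  set φ : ℂ := (e i * (starRingEnd ℂ) (e j)) * (e k * (starRingEnd ℂ) (e l)) with hφdef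
  have hpt : ∀ ψ : Fin d → ℂ,
      (e i * ψ i * (starRingEnd ℂ) (e j * ψ j)) * (e k * ψ k * (starRingEnd ℂ) (e l * ψ l))
        = φ * ((ψ i * (starRingEnd ℂ) (ψ j)) * (ψ k * (starRingEnd ℂ) (ψ l))) := by
    intro ψ; simp only [map_mul, hφdef]; ring
  simp only [hpt] at h2
  rw [MeasureTheory.integral_const_mul] at h2
  have hT : φ * T μ i j k l = T μ i j k l := h2
  have hφ1 : φ ≠ 1 := by
    have hI : (Complex.I : ℂ) ≠ 1 := by
      intro hc; have := congrArg Complex.im hc; simp at this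
    have hnI : (-Complex.I : ℂ) ≠ 1 := by
      intro hc; have := congrArg Complex.im hc; simp at this
    have hn1 : (-1 : ℂ) ≠ 1 := by norm_num
    by_cases hi : i = t <;> by_cases hj : j = t <;> by_cases hk : k = t <;> by_cases hl : l = t <;>
      simp only [hi, hj, hk, hl, if_pos, if_neg, he, hφdef] at h ⊢ <;>
      simp_all [Complex.conj_I, Complex.I_mul_I] <;>
      first
        | exact hI | exact hnI | exact hn1
        | (intro hc; apply hnI; linear_combination hc)
        | (intro hc; apply hn1; linear_combination hc)
        | (intro hc; apply hI; linear_combination hc)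
  have : (φ - 1) * T μ i j k l = 0 := by linear_combination hT
  rcases mul_eq_zero.mp this with hc | hc
  · exact absurd (by linear_combination hc) hφ1
  · exact hc

lemma T_swap_inner (i j : Fin d) : T μ i j j i = T μ i i j j := by
  unfold T; exact integral_congr_ae (Filter.Eventually.of_forall fun ψ => by ring)

lemma T_had (hsphere : μ {ψ | ∑ x, ‖ψ x‖ ^ 2 = 1} = 1)
    (hinv : ∀ U ∈ Matrix.unitaryGroup (Fin d) ℂ,
      Measure.map (fun ψ => U.mulVec ψ) μ = μ)
    (p q : Fin d) (hpq : p ≠ q) :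
    T μ p p p p = 2 * T μ p p q q := by
  classical
  set c : ℂ := (((Real.sqrt 2)⁻¹ : ℝ) : ℂ) with hcdef
  have hcc : c * c = 2⁻¹ := by
    rw [hcdef, ← Complex.ofReal_mul, ← mul_inv, Real.mul_self_sqrt (by norm_num : (0:ℝ) ≤ 2)]
    norm_num
  have hcs : (starRingEnd ℂ) c = c := Complex.conj_ofReal _
  set H : Matrix (Fin d) (Fin d) ℂ := Matrix.of (fun a b =>
    if a = p then (if b = p then c else if b = q then c else 0)
    else if a = q then (if b = p then c else if b = q then -c else 0)
    else if b = a then 1 else 0) with hH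
  have hsum : ∀ f : Fin d → ℂ,
      ∑ x, f x = f p + (f q + ∑ x ∈ (Finset.univ.erase p).erase q, f x) := by
    intro f
    rw [← Finset.add_sum_erase Finset.univ f (Finset.mem_univ p),
      ← Finset.add_sum_erase (Finset.univ.erase p) f
        (Finset.mem_erase.2 ⟨hpq.symm, Finset.mem_univ q⟩)]
  have htail : ∀ x ∈ (Finset.univ.erase p).erase q, x ≠ p ∧ x ≠ q := by
    intro x hx
    simp only [Finset.mem_erase] at hx
    exact ⟨hx.2.1, hx.1⟩
  have hHval : ∀ a b, H a b =
      if a = p then (if b = p then c else if b = q then c else 0)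
      else if a = q then (if b = p then c else if b = q then -c else 0)
      else if b = a then 1 else 0 := fun a b => rfl
  have hUnit : H ∈ Matrix.unitaryGroup (Fin d) ℂ := by
    rw [Matrix.mem_unitaryGroup_iff]
    ext a b
    rw [Matrix.mul_apply, Matrix.one_apply]
    rw [hsum (fun x => H a x * (star H) x b)]
    have hstar : ∀ x y, (star H) x y = (starRingEnd ℂ) (H y x) := fun x y => rfl
    simp only [hstar]
    have hHval : ∀ a b, H a b =
        if a = p then (if b = p then c else if b = q then c else 0)
        else if a = q then (if b = p then c else if b = q then -c else 0)
        else if b = a then 1 else 0 := fun a b => rfl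
    by_cases hap : a = p <;> by_cases haq : a = q <;>
      by_cases hbp : b = p <;> by_cases hbq : b = q
    · exact absurd (hap.symm.trans haq) hpq
    · exact absurd (hap.symm.trans haq) hpq
    · exact absurd (hap.symm.trans haq) hpq
    · exact absurd (hap.symm.trans haq) hpq
    · exact absurd (hbp.symm.trans hbq) hpq
    · -- a = p, b = p
      rw [Finset.sum_eq_zero (fun x hx => by
        simp [hHval, hap, (htail x hx).1, (htail x hx).2])]
      simp only [hHval, hap, hbp, if_pos, hpq, hpq.symm, if_neg, hcs]
      simp [hpq.symm]
      rw [hcs]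
      linear_combination 2 * hcc
    · -- a = p, b = q
      rw [Finset.sum_eq_zero (fun x hx => by
        simp [hHval, hap, (htail x hx).1, (htail x hx).2])]
      simp only [hHval, hap, hbq, if_pos]
      simp [hpq, hpq.symm, hbp, Ne.symm hpq, map_neg, hcs, hap, hbq]
    · -- a = p, b outside
      rw [Finset.sum_eq_zero (fun x hx => by
        simp [hHval, hap, (htail x hx).1, (htail x hx).2])]
      simp [hHval, hap, hbp, hbq, hpq, hpq.symm, Ne.symm hbp, Ne.symm hbq,
        fun h : a = b => hbp (h ▸ hap)]
    · exact absurd (hbp.symm.trans hbq) hpq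
    · -- a = q, b = p
      rw [Finset.sum_eq_zero (fun x hx => by
        simp [hHval, haq, hap, (htail x hx).1, (htail x hx).2])]
      simp [hHval, hap, haq, hbp, hbq, hpq, hpq.symm, hcs]
    · -- a = q, b = q
      rw [Finset.sum_eq_zero (fun x hx => by
        simp [hHval, haq, hap, (htail x hx).1, (htail x hx).2])]
      simp [hHval, hap, haq, hbp, hbq, hpq, hpq.symm, hcs]
      linear_combination 2 * hcc
    · -- a = q, b outside
      rw [Finset.sum_eq_zero (fun x hx => by
        simp [hHval, haq, hap, (htail x hx).1, (htail x hx).2])]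
      simp [hHval, hap, haq, hbp, hbq, hpq, hpq.symm, Ne.symm hbp, Ne.symm hbq,
        fun h : a = b => hbq (h ▸ haq)]
    · exact absurd (hbp.symm.trans hbq) hpq
    · -- a outside, b = p
      rw [Finset.sum_eq_zero (fun x hx => by
        simp [hHval, hap, haq, hbp, (htail x hx).1, (htail x hx).2])]
      simp [hHval, hap, haq, hbp, hbq, hpq, hpq.symm, Ne.symm hap, Ne.symm haq,
        fun h : a = b => hap (h ▸ hbp)]
    · -- a outside, b = q
      rw [Finset.sum_eq_zero (fun x hx => by
        simp [hHval, hap, haq, hbq, (htail x hx).1, (htail x hx).2])]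
      simp [hHval, hap, haq, hbp, hbq, hpq, hpq.symm, Ne.symm hap, Ne.symm haq,
        fun h : a = b => haq (h ▸ hbq)]
    · -- both outside
      have hterm : ∀ x, x ≠ p → x ≠ q →
          H a x * (starRingEnd ℂ) (H b x) = if x = a ∧ x = b then 1 else 0 := by
        intro x h1 h2
        rw [hHval a x, hHval b x, if_neg hap, if_neg haq, if_neg hbp, if_neg hbq]
        clear! H
        by_cases u : x = a <;> by_cases v : x = b <;> simp [u, v]
      rw [Finset.sum_congr rfl (fun x hx => hterm x (htail x hx).1 (htail x hx).2)]
      have hheads : H a p * (starRingEnd ℂ) (H b p) = 0 ∧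
          H a q * (starRingEnd ℂ) (H b q) = 0 := by
        constructor <;>
          [rw [hHval a p, hHval b p]; rw [hHval a q, hHval b q]] <;>
          rw [if_neg hap, if_neg haq, if_neg hbp, if_neg hbq] <;>
          (clear! H) <;> simp [Ne.symm hap, Ne.symm haq]
      rw [hheads.1, hheads.2]
      by_cases hab : a = b
      · subst hab
        simp only [and_self]
        rw [Finset.sum_ite_eq' ((Finset.univ.erase p).erase q) a (fun _ => (1:ℂ))]
        simp [Finset.mem_erase, hap, haq]
      · rw [Finset.sum_eq_zero (fun x hx => by
          split_ifs with hw
          · exact absurd (hw.1.symm.trans hw.2) hab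
          · rfl)]
        simp [hab]
  have hmv : ∀ ψ : Fin d → ℂ, H.mulVec ψ p = c * ψ p + c * ψ q := by
    intro ψ
    have h0 : H.mulVec ψ p = ∑ x, H p x * ψ x := rfl
    rw [h0, hsum (fun x => H p x * ψ x)]
    rw [Finset.sum_eq_zero (fun x hx => by
      rw [hHval p x]
      simp [(htail x hx).1, (htail x hx).2])]
    rw [hHval p p, hHval p q]
    simp [hpq, hpq.symm]
  have h2 := inv_int hinv hUnit
    (fun ψ => (ψ p * (starRingEnd ℂ) (ψ p)) * (ψ p * (starRingEnd ℂ) (ψ p)))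
    (mono_cont p p p p)
  set s4 : Finset (Fin d × Fin d × Fin d × Fin d) :=
    ({p,q} ×ˢ ({p,q} ×ˢ ({p,q} ×ˢ ({p,q} : Finset (Fin d))))) with hs4
  have hexp : ∀ ψ : Fin d → ℂ,
      (H.mulVec ψ p * (starRingEnd ℂ) (H.mulVec ψ p)) *
        (H.mulVec ψ p * (starRingEnd ℂ) (H.mulVec ψ p))
      = (4:ℂ)⁻¹ * ∑ r ∈ s4,
          (ψ r.1 * (starRingEnd ℂ) (ψ r.2.1)) * (ψ r.2.2.1 * (starRingEnd ℂ) (ψ r.2.2.2)) := by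
    intro ψ
    rw [hmv ψ]
    have e1 : (c * ψ p + c * ψ q) * (starRingEnd ℂ) (c * ψ p + c * ψ q)
        = 2⁻¹ * ((ψ p + ψ q) * ((starRingEnd ℂ) (ψ p) + (starRingEnd ℂ) (ψ q))) := by
      simp only [map_add, map_mul, hcs]
      linear_combination ((ψ p + ψ q) * ((starRingEnd ℂ) (ψ p) + (starRingEnd ℂ) (ψ q))) * hcc
    rw [e1, hs4]
    simp only [Finset.sum_product, Finset.sum_pair hpq]
    ring
  have hcongr : ∫ ψ, ((H.mulVec ψ) p * (starRingEnd ℂ) ((H.mulVec ψ) p)) *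
        ((H.mulVec ψ) p * (starRingEnd ℂ) ((H.mulVec ψ) p)) ∂μ
      = ∫ ψ, (4:ℂ)⁻¹ * ∑ r ∈ s4,
          (ψ r.1 * (starRingEnd ℂ) (ψ r.2.1)) * (ψ r.2.2.1 * (starRingEnd ℂ) (ψ r.2.2.2)) ∂μ :=
    integral_congr_ae (Filter.Eventually.of_forall fun ψ => hexp ψ)
  have h3 : ∫ ψ, (4:ℂ)⁻¹ * ∑ r ∈ s4,
        (ψ r.1 * (starRingEnd ℂ) (ψ r.2.1)) * (ψ r.2.2.1 * (starRingEnd ℂ) (ψ r.2.2.2)) ∂μ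
      = (4:ℂ)⁻¹ * ∑ r ∈ s4, T μ r.1 r.2.1 r.2.2.1 r.2.2.2 := by
    rw [MeasureTheory.integral_const_mul,
      integral_finset_sum s4 (fun r _ => mono_integrable hsphere r.1 r.2.1 r.2.2.1 r.2.2.2)]
    rfl
  have hz : ∀ u v w x : Fin d,
      (((if u = p then 1 else 0) + (if w = p then 1 else 0) : ℕ)
        ≠ (if v = p then 1 else 0) + (if x = p then 1 else 0)) → T μ u v w x = 0 :=
    fun u v w x h => T_phase hinv p u v w x h
  have hqp : q ≠ p := Ne.symm hpq
  have hqqqq : T μ q q q q = T μ p p p p := by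
    simpa [Equiv.swap_apply_left] using T_perm hinv (Equiv.swap p q) p p p p
  have hqqpp : T μ q q p p = T μ p p q q := by
    simpa [Equiv.swap_apply_left, Equiv.swap_apply_right]
      using T_perm hinv (Equiv.swap p q) p p q q
  have hpqqp : T μ p q q p = T μ p p q q := T_swap_inner p q
  have hqppq : T μ q p p q = T μ p p q q := (T_swap_inner q p).trans hqqpp
  have h16 : ∑ r ∈ s4, T μ r.1 r.2.1 r.2.2.1 r.2.2.2
      = 2 * T μ p p p p + 4 * T μ p p q q := by
    rw [hs4]
    simp only [Finset.sum_product, Finset.sum_pair hpq]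
    rw [hz p p p q (by simp [hqp]), hz p p q p (by simp [hqp]),
      hz p q p p (by simp [hqp]), hz p q p q (by simp [hqp]),
      hz p q q q (by simp [hqp]), hz q p q p (by simp [hqp]),
      hz q p q q (by simp [hqp]), hz q q p q (by simp [hqp]),
      hz q q q p (by simp [hqp]), hz q p p p (by simp [hqp]),
      hqqqq, hqqpp, hpqqp, hqppq]
    ring
  have hfin : T μ p p p p = (4:ℂ)⁻¹ * (2 * T μ p p p p + 4 * T μ p p q q) := by
    calc T μ p p p p
        = ∫ ψ, ((H.mulVec ψ) p * (starRingEnd ℂ) ((H.mulVec ψ) p)) *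
            ((H.mulVec ψ) p * (starRingEnd ℂ) ((H.mulVec ψ) p)) ∂μ := h2.symm
      _ = (4:ℂ)⁻¹ * ∑ r ∈ s4, T μ r.1 r.2.1 r.2.2.1 r.2.2.2 := hcongr.trans h3
      _ = (4:ℂ)⁻¹ * (2 * T μ p p p p + 4 * T μ p p q q) := by rw [h16]
  linear_combination 2 * hfin

lemma T_pa (hinv : ∀ U ∈ Matrix.unitaryGroup (Fin d) ℂ,
      Measure.map (fun ψ => U.mulVec ψ) μ = μ) (p r : Fin d) :
    T μ p p p p = T μ r r r r := by
  simpa [Equiv.swap_apply_right] using T_perm hinv (Equiv.swap p r) r r r r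

lemma T_pb (hinv : ∀ U ∈ Matrix.unitaryGroup (Fin d) ℂ,
      Measure.map (fun ψ => U.mulVec ψ) μ = μ)
    (p q r u : Fin d) (hpq : p ≠ q) (hru : r ≠ u) :
    T μ p p q q = T μ r r u u := by
  classical
  set τ : Equiv.Perm (Fin d) := Equiv.swap r p with hτ
  have hτr : τ r = p := Equiv.swap_apply_left r p
  set j' : Fin d := τ q with hj'
  have hj'r : j' ≠ r := by
    intro hc
    apply hpq
    have h2 := congrArg τ hc
    rw [hj'] at h2
    rw [show τ (τ q) = q from Equiv.swap_apply_self r p q] at h2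
    rw [h2, hτr]
  have hru' : r ≠ u := hru
  set σ : Equiv.Perm (Fin d) := (Equiv.swap u j').trans τ with hσ
  have hσr : σ r = p := by
    rw [hσ, Equiv.trans_apply, Equiv.swap_apply_of_ne_of_ne hru (Ne.symm hj'r), hτr]
  have hσu : σ u = q := by
    rw [hσ, Equiv.trans_apply, Equiv.swap_apply_left, hj',
      show τ (τ q) = q from Equiv.swap_apply_self r p q]
  have key := T_perm hinv σ r r u u
  rw [hσr, hσu] at key
  exact key

lemma T_norm (hsphere : μ {ψ | ∑ x, ‖ψ x‖ ^ 2 = 1} = 1)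
    (hinv : ∀ U ∈ Matrix.unitaryGroup (Fin d) ℂ,
      Measure.map (fun ψ => U.mulVec ψ) μ = μ)
    (hd : 2 ≤ d) (p q : Fin d) (hpq : p ≠ q) :
    (d : ℂ) * T μ p p p p + ((d : ℂ)^2 - d) * T μ p p q q = 1 := by
  classical
  set a : ℂ := T μ p p p p with ha
  set b : ℂ := T μ p p q q with hb
  have h1 : ∫ ψ, (∑ r : Fin d × Fin d,
      (ψ r.1 * (starRingEnd ℂ) (ψ r.1)) * (ψ r.2 * (starRingEnd ℂ) (ψ r.2))) ∂μ = 1 := by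
    rw [show (1:ℂ) = ∫ _ψ, (1:ℂ) ∂μ by simp]
    apply integral_congr_ae
    filter_upwards [ae_sphere hsphere] with ψ hψ
    have hpt : ∀ t : Fin d, ψ t * (starRingEnd ℂ) (ψ t) = ((‖ψ t‖^2 : ℝ) : ℂ) := by
      intro t
      rw [Complex.mul_conj]
      norm_cast
      rw [← Complex.sq_norm]
    calc ∑ r : Fin d × Fin d,
          (ψ r.1 * (starRingEnd ℂ) (ψ r.1)) * (ψ r.2 * (starRingEnd ℂ) (ψ r.2))
        = (∑ t, ψ t * (starRingEnd ℂ) (ψ t)) * (∑ t, ψ t * (starRingEnd ℂ) (ψ t)) := by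
          rw [Finset.sum_mul_sum, Fintype.sum_prod_type]
      _ = ((∑ t, ‖ψ t‖^2 : ℝ) : ℂ) * ((∑ t, ‖ψ t‖^2 : ℝ) : ℂ) := by
          simp only [hpt]
          push_cast
          ring
      _ = 1 := by rw [hψ]; norm_num
  have h2 : ∫ ψ, (∑ r : Fin d × Fin d,
      (ψ r.1 * (starRingEnd ℂ) (ψ r.1)) * (ψ r.2 * (starRingEnd ℂ) (ψ r.2))) ∂μ
      = ∑ r : Fin d × Fin d, T μ r.1 r.1 r.2 r.2 := by
    rw [integral_finset_sum _ (fun r _ => mono_integrable hsphere r.1 r.1 r.2 r.2)]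
    rfl
  have h3 : ∑ r : Fin d × Fin d, T μ r.1 r.1 r.2 r.2
      = ∑ r : Fin d × Fin d, (if r.1 = r.2 then a else b) := by
    refine Finset.sum_congr rfl fun r _ => ?_
    by_cases hr : r.1 = r.2
    · rw [if_pos hr, hr, ha]
      exact (T_pa hinv p r.2).symm ▸ T_pa hinv r.2 p ▸ rfl
    · rw [if_neg hr, hb]
      exact T_pb hinv r.1 r.2 p q hr hpq ▸ rfl
  have h4 : ∑ r : Fin d × Fin d, (if r.1 = r.2 then a else b)
      = (d : ℂ) * a + ((d : ℂ)^2 - d) * b := by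
    have hsplit : ∀ r : Fin d × Fin d, (if r.1 = r.2 then a else b)
        = b + (if r.1 = r.2 then a - b else 0) := by
      intro r; split_ifs <;> ring
    simp only [hsplit]
    rw [Finset.sum_add_distrib, Finset.sum_const]
    have : ∑ r : Fin d × Fin d, (if r.1 = r.2 then a - b else 0) = (d : ℂ) * (a - b) := by
      rw [Fintype.sum_prod_type]
      have hinner : ∀ t : Fin d, (∑ u : Fin d, if t = u then a - b else 0) = a - b := by
        intro t
        rw [Finset.sum_ite_eq Finset.univ t (fun _ => a - b)]
        simp
      rw [Finset.sum_congr rfl (fun t _ => hinner t), Finset.sum_const]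
      simp [mul_comm]
    rw [this]
    simp [Finset.card_univ]
    ring
  have hfin := h1.symm.trans (h2.trans (h3.trans h4))
  linear_combination hfin.symm

lemma T_one (hsphere : μ {ψ | ∑ x, ‖ψ x‖ ^ 2 = 1} = 1) (hd : d = 1) (p : Fin d) :
    T μ p p p p = 1 := by
  subst hd
  unfold T
  rw [show (1:ℂ) = ∫ _ψ, (1:ℂ) ∂μ by simp]
  apply integral_congr_ae
  filter_upwards [ae_sphere hsphere] with ψ hψ
  rw [Fin.sum_univ_one] at hψ
  have hp : p = 0 := Subsingleton.elim p 0
  rw [hp]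
  have h1 : ψ 0 * (starRingEnd ℂ) (ψ 0) = ((‖ψ 0‖^2 : ℝ) : ℂ) := by
    rw [Complex.mul_conj]
    norm_cast
    rw [← Complex.sq_norm]
  rw [h1, hψ]
  norm_num

end Stmt11

open Stmt11

/-- The Haar (unitarily invariant probability) average of
|ψ⟩⟨ψ| ⊗ |ψ⟩⟨ψ| over unit vectors ψ in a d-dimensional Hilbert space equals
(I + F)/(d + d²), where F is the swap operator. -/
theorem stmt11 (d : ℕ)
    (μ : Measure (Fin d → ℂ)) [IsProbabilityMeasure μ]
    (hsphere : μ {ψ | ∑ x, ‖ψ x‖ ^ 2 = 1} = 1)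
    (hinv : ∀ U ∈ Matrix.unitaryGroup (Fin d) ℂ,
      Measure.map (fun ψ => U.mulVec ψ) μ = μ)
    (F : Matrix (Fin d × Fin d) (Fin d × Fin d) ℂ)
    (hF : ∀ x y, F x y = if x.1 = y.2 ∧ x.2 = y.1 then 1 else 0) :
    ∀ x y : Fin d × Fin d,
      (∫ ψ, (ψ x.1 * (starRingEnd ℂ) (ψ y.1)) * (ψ x.2 * (starRingEnd ℂ) (ψ y.2)) ∂μ)
        = (((d : ℂ) + (d : ℂ) ^ 2)⁻¹ •
            ((1 : Matrix (Fin d × Fin d) (Fin d × Fin d) ℂ) + F)) x y := by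
  classical
  rintro ⟨i, k⟩ ⟨j, l⟩
  have hLHS : (∫ ψ, (ψ i * (starRingEnd ℂ) (ψ j)) * (ψ k * (starRingEnd ℂ) (ψ l)) ∂μ)
      = T μ i j k l := rfl
  rw [hLHS]
  rw [Matrix.smul_apply, Matrix.add_apply, Matrix.one_apply, hF]
  simp only [Prod.mk.injEq, smul_eq_mul]
  have hd1 : 0 < d := i.pos
  by_cases hdone : d = 1
  · subst hdone
    have hall : ∀ u v : Fin 1, u = v := fun u v => Subsingleton.elim u v
    rw [hall j i, hall k i, hall l i, T_one hsphere rfl i]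
    norm_num
  · have hd2 : 2 ≤ d := by omega
    -- pick two distinct indices
    have hne : ((d : ℂ) + (d : ℂ)^2) ≠ 0 := by
      have hcast : ((d : ℂ) + (d : ℂ)^2) = (((d + d^2 : ℕ) : ℝ) : ℂ) := by push_cast; ring
      rw [hcast]
      simp only [ne_eq, Complex.ofReal_eq_zero, Nat.cast_eq_zero]
      omega
    obtain ⟨p0, p1, hp01⟩ : ∃ p0 p1 : Fin d, p0 ≠ p1 :=
      ⟨⟨0, by omega⟩, ⟨1, by omega⟩, by simp [Fin.ext_iff]⟩
    set b : ℂ := T μ p0 p0 p1 p1 with hbdef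
    have hhad : T μ p0 p0 p0 p0 = 2 * b := T_had hsphere hinv p0 p1 hp01
    have hnorm := T_norm hsphere hinv hd2 p0 p1 hp01
    rw [hhad] at hnorm
    have hbval : b = ((d : ℂ) + (d : ℂ)^2)⁻¹ := by
      have h1 : ((d:ℂ) + (d:ℂ)^2) * b = 1 := by linear_combination hnorm
      exact eq_inv_of_mul_eq_one_right h1
    by_cases h1 : i = j ∧ k = l
    · by_cases h2 : i = l ∧ k = j
      · rw [if_pos h1, if_pos h2]
        obtain ⟨hij, hkl⟩ := h1
        obtain ⟨hil, hkj⟩ := h2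
        rw [← hij, ← hkl, show k = i from (hil.trans hkl.symm).symm,
          T_pa hinv i p0, hhad, hbval]
        ring
      · rw [if_pos h1, if_neg h2]
        obtain ⟨hij, hkl⟩ := h1
        have hik : i ≠ k := fun hc => h2 ⟨hc.trans hkl, hc.symm.trans hij⟩
        rw [← hij, ← hkl, T_pb hinv i k p0 p1 hik hp01, ← hbdef, hbval]
        ring
    · by_cases h2 : i = l ∧ k = j
      · rw [if_neg h1, if_pos h2]
        obtain ⟨hil, hkj⟩ := h2
        have hik : i ≠ k := fun hc => h1 ⟨hc.trans hkj, hc.symm.trans hil⟩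
        rw [← hil, ← hkj, T_swap_inner i k, T_pb hinv i k p0 p1 hik hp01, ← hbdef, hbval]
        ring
      · have hzero : T μ i j k l = 0 := by
          have hw : ∃ t : Fin d, (((if i = t then 1 else 0) + (if k = t then 1 else 0) : ℕ)
              ≠ (if j = t then 1 else 0) + (if l = t then 1 else 0)) := by
            by_contra hc
            push_neg at hc
            by_cases hji : j = i
            · by_cases hlk : l = k
              · exact h1 ⟨hji.symm, hlk.symm⟩
              · have hk := hc k
                simp only [hji, hlk, if_true, if_false] at hk
                split_ifs at hk <;> omega
            · by_cases hli : l = i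
              · by_cases hjk : j = k
                · exact h2 ⟨hli.symm, hjk.symm⟩
                · have hk := hc k
                  simp only [hjk, hli, if_true, if_false] at hk
                  split_ifs at hk <;> omega
              · have hi := hc i
                simp only [hji, hli, if_true, if_false] at hi
                split_ifs at hi <;> omega
          obtain ⟨t, ht⟩ := hw
          exact T_phase hinv t i j k l ht
        rw [if_neg h1, if_neg h2, hzero]
        ring
end

section
/- Let H_A, H_Ā be finite-dimensional Hilbert spaces of dimensions d_A, d_Ā, and let ρ = |ψ⟩⟨ψ| for a unit vector ψ ∈ H_A ⊗ H_Ā. With F_A the operator on (H_A ⊗ H_Ā)^{⊗2} that swaps only the A-factors, the Haar averages satisfy ⟨Tr[(ρ ⊗ ρ) F_A]⟩ = (d_A + d_Ā)/(d_A d_Ā + 1) and ⟨Tr[ρ ⊗ ρ]⟩ = 1, where ⟨·⟩ denotes averaging ψ over the unit sphere of H_A ⊗ H_Ā. -/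
open MeasureTheory Kronecker

set_option linter.unusedSectionVars false
variable {ι : Type*} [Fintype ι] [DecidableEq ι]
variable (μ : Measure (ι → ℂ)) [IsProbabilityMeasure μ]


def mono (x y z w : ι) (ψ : ι → ℂ) : ℂ :=
  ψ x * ψ y * (starRingEnd ℂ) (ψ z) * (starRingEnd ℂ) (ψ w)

noncomputable def mom (x y z w : ι) : ℂ := ∫ ψ, mono x y z w ψ ∂μ

lemma measurable_eval (x : ι) : Measurable (fun ψ : ι → ℂ => ψ x) := measurable_pi_apply x

lemma measurable_mono (x y z w : ι) : Measurable (mono x y z w) := by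
  unfold mono
  exact (((measurable_eval x).mul (measurable_eval y)).mul
    (Complex.continuous_conj.measurable.comp (measurable_eval z))).mul (Complex.continuous_conj.measurable.comp (measurable_eval w))

lemma sphere_measurable : MeasurableSet {ψ : ι → ℂ | ∑ x, ‖ψ x‖ ^ 2 = 1} := by
  have : Measurable (fun ψ : ι → ℂ => ∑ x, ‖ψ x‖ ^ 2) :=
    Finset.measurable_sum _ (fun x _ => ((measurable_eval x).norm.pow_const 2))
  exact this (measurableSet_singleton 1)

lemma ae_sphere (hsphere : μ {ψ | ∑ x, ‖ψ x‖ ^ 2 = 1} = 1) :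
    ∀ᵐ ψ ∂μ, ∑ x, ‖ψ x‖ ^ 2 = 1 := by
  have := ae_iff_measure_eq (μ := μ) (p := fun ψ : ι → ℂ => ∑ x, ‖ψ x‖ ^ 2 = 1)
    sphere_measurable.nullMeasurableSet
  rw [this]
  simpa using hsphere

lemma ae_bound (hsphere : μ {ψ | ∑ x, ‖ψ x‖ ^ 2 = 1} = 1) :
    ∀ᵐ ψ ∂μ, ∀ x : ι, ‖ψ x‖ ≤ 1 := by
  filter_upwards [ae_sphere μ hsphere] with ψ hψ x
  have h1 : ‖ψ x‖ ^ 2 ≤ 1 := by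
    rw [← hψ]
    exact Finset.single_le_sum (f := fun x => ‖ψ x‖ ^ 2) (fun i _ => by positivity)
      (Finset.mem_univ x)
  nlinarith [norm_nonneg (ψ x)]

lemma integrable_mono (hsphere : μ {ψ | ∑ x, ‖ψ x‖ ^ 2 = 1} = 1) (x y z w : ι) :
    Integrable (mono x y z w) μ := by
  refine ⟨(measurable_mono x y z w).aestronglyMeasurable, HasFiniteIntegral.of_bounded (C := 1) ?_⟩
  filter_upwards [ae_bound μ hsphere] with ψ hψ
  unfold mono
  simp only [norm_mul, RCLike.norm_conj]
  calc ‖ψ x‖ * ‖ψ y‖ * ‖ψ z‖ * ‖ψ w‖ ≤ 1*1*1*1 := by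
        gcongr <;> [exact hψ x; exact hψ y; exact hψ z; exact hψ w]
    _ = 1 := by norm_num


lemma measurable_mulVec (U : Matrix ι ι ℂ) : Measurable (fun ψ : ι → ℂ => U.mulVec ψ) := by
  refine measurable_pi_lambda _ (fun j => ?_)
  simp only [Matrix.mulVec, dotProduct]
  exact Finset.measurable_sum _ (fun k _ => (measurable_const.mul (measurable_pi_apply k)))

lemma integral_comp_unitary
    (hinv : ∀ U ∈ Matrix.unitaryGroup ι ℂ, Measure.map (fun ψ => U.mulVec ψ) μ = μ)
    (U : Matrix ι ι ℂ) (hU : U ∈ Matrix.unitaryGroup ι ℂ)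
    (f : (ι → ℂ) → ℂ) (hf : Measurable f) :
    ∫ ψ, f ψ ∂μ = ∫ ψ, f (U.mulVec ψ) ∂μ := by
  conv_lhs => rw [← hinv U hU]
  exact integral_map (measurable_mulVec U).aemeasurable
    (hf.aestronglyMeasurable)



def phaseMat (t : ι) : Matrix ι ι ℂ :=
  Matrix.diagonal (fun j => if j = t then Complex.I else 1)

lemma phaseMat_unitary (t : ι) : phaseMat t ∈ Matrix.unitaryGroup ι ℂ := by
  rw [Matrix.mem_unitaryGroup_iff]
  unfold phaseMat
  rw [Matrix.star_eq_conjTranspose, Matrix.diagonal_conjTranspose, Matrix.diagonal_mul_diagonal]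
  have : (fun j : ι => (if j = t then Complex.I else 1) * star (if j = t then Complex.I else 1))
      = fun _ => (1:ℂ) := by
    funext j
    by_cases h : j = t <;> simp [h, Complex.mul_conj']
  simp only [Pi.star_apply]
  rw [this, Matrix.diagonal_one]

lemma phaseMat_mulVec (t : ι) (ψ : ι → ℂ) (j : ι) :
    (phaseMat t).mulVec ψ j = (if j = t then Complex.I else 1) * ψ j := by
  unfold phaseMat; rw [Matrix.mulVec_diagonal]


lemma mom_phase (hinv : ∀ U ∈ Matrix.unitaryGroup ι ℂ, Measure.map (fun ψ => U.mulVec ψ) μ = μ)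
    (t x y z w : ι) :
    mom μ x y z w = ((if x = t then Complex.I else 1) * (if y = t then Complex.I else 1) *
      (starRingEnd ℂ) (if z = t then Complex.I else 1) *
      (starRingEnd ℂ) (if w = t then Complex.I else 1)) * mom μ x y z w := by
  conv_lhs => rw [mom,
    integral_comp_unitary μ hinv (phaseMat t) (phaseMat_unitary t) _ (measurable_mono x y z w)]
  rw [mom, ← integral_const_mul]
  congr 1
  funext ψ
  unfold mono
  simp only [phaseMat_mulVec, map_mul]
  ring

lemma eq_self_mul_imp {c m : ℂ} (h : m = c * m) (hc : c ≠ 1) : m = 0 := by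
  have h0 : (1 - c) * m = 0 := by linear_combination h
  rcases mul_eq_zero.mp h0 with h1 | h2
  · exact absurd (by linear_combination -h1) hc
  · exact h2

/-- x appears once on the left, never on the right -/
lemma mom_zero_1L (hinv : ∀ U ∈ Matrix.unitaryGroup ι ℂ, Measure.map (fun ψ => U.mulVec ψ) μ = μ)
    (x y z w : ι) (hy : y ≠ x) (hz : z ≠ x) (hw : w ≠ x) :
    mom μ x y z w = 0 := by
  refine eq_self_mul_imp (mom_phase μ hinv x x y z w) ?_
  simp [hy, hz, hw, Complex.ext_iff]

/-- z appears once on the right, never on the left -/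
lemma mom_zero_1R (hinv : ∀ U ∈ Matrix.unitaryGroup ι ℂ, Measure.map (fun ψ => U.mulVec ψ) μ = μ)
    (x y z w : ι) (hx : x ≠ z) (hy : y ≠ z) (hw : w ≠ z) :
    mom μ x y z w = 0 := by
  refine eq_self_mul_imp (mom_phase μ hinv z x y z w) ?_
  simp [hx, hy, hw, Complex.ext_iff]

/-- doubled on left, none on right: xxyy pattern gives -1 -/
lemma mom_zero_2L (hinv : ∀ U ∈ Matrix.unitaryGroup ι ℂ, Measure.map (fun ψ => U.mulVec ψ) μ = μ)
    (x y z w : ι) (hz : z ≠ x) (hw : w ≠ x) :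
    mom μ x x z w = 0 := by
  refine eq_self_mul_imp (mom_phase μ hinv x x x z w) ?_
  simp only [if_pos rfl, if_neg hz, if_neg hw, map_one, mul_one, Complex.I_mul_I]
  norm_num

/-- x x x y pattern : factor I*I*conj I = I -/
lemma mom_zero_3 (hinv : ∀ U ∈ Matrix.unitaryGroup ι ℂ, Measure.map (fun ψ => U.mulVec ψ) μ = μ)
    (x w : ι) (hw : w ≠ x) :
    mom μ x x x w = 0 := by
  refine eq_self_mul_imp (mom_phase μ hinv x x x x w) ?_
  simp [hw, Complex.ext_iff]

lemma mom_comm_left (x y z w : ι) : mom μ x y z w = mom μ y x z w := by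
  unfold mom mono; congr 1; funext ψ; ring

lemma mom_comm_right (x y z w : ι) : mom μ x y z w = mom μ x y w z := by
  unfold mom mono; congr 1; funext ψ; ring

lemma mom_conj (x y z w : ι) : mom μ z w x y = (starRingEnd ℂ) (mom μ x y z w) := by
  unfold mom mono
  rw [← integral_conj]
  congr 1; funext ψ; simp only [map_mul, Complex.conj_conj]; ring

def permMat (σ : Equiv.Perm ι) : Matrix ι ι ℂ :=
  fun j k => if σ j = k then 1 else 0

lemma permMat_unitary (σ : Equiv.Perm ι) : permMat σ ∈ Matrix.unitaryGroup ι ℂ := by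
  rw [Matrix.mem_unitaryGroup_iff]
  ext j l
  simp only [Matrix.mul_apply, Matrix.star_apply, Matrix.star_eq_conjTranspose,
    Matrix.conjTranspose_apply, permMat]
  simp only [apply_ite (star : ℂ → ℂ), star_one, star_zero]
  have hterm : ∀ k : ι, (if σ j = k then (1:ℂ) else 0) * (if σ l = k then 1 else 0)
      = if k = σ j then (if σ l = k then (1:ℂ) else 0) else 0 := by
    intro k
    by_cases h : σ j = k
    · simp [h]
    · rw [if_neg h, zero_mul, if_neg (fun hc => h (Eq.symm hc))]
  rw [Finset.sum_congr rfl (fun k _ => hterm k)]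
  rw [Finset.sum_ite_eq' Finset.univ (σ j) (fun k => if σ l = k then (1:ℂ) else 0)]
  simp only [Finset.mem_univ, if_true]
  by_cases h : j = l
  · simp [h, Matrix.one_apply]
  · have : σ l ≠ σ j := fun hc => h (σ.injective hc).symm
    simp [this, Matrix.one_apply, h]

lemma permMat_mulVec (σ : Equiv.Perm ι) (ψ : ι → ℂ) (j : ι) :
    (permMat σ).mulVec ψ j = ψ (σ j) := by
  unfold permMat Matrix.mulVec dotProduct
  have hterm : ∀ k : ι, (if σ j = k then (1:ℂ) else 0) * ψ k
      = if k = σ j then ψ k else 0 := by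
    intro k
    by_cases h : σ j = k
    · simp [h]
    · rw [if_neg h, if_neg (fun hc => h hc.symm), zero_mul]
  rw [Finset.sum_congr rfl (fun k _ => hterm k)]
  rw [Finset.sum_ite_eq' Finset.univ (σ j) ψ]
  simp

lemma mom_perm (hinv : ∀ U ∈ Matrix.unitaryGroup ι ℂ, Measure.map (fun ψ => U.mulVec ψ) μ = μ)
    (σ : Equiv.Perm ι) (x y z w : ι) :
    mom μ x y z w = mom μ (σ x) (σ y) (σ z) (σ w) := by
  conv_lhs => rw [mom,
    integral_comp_unitary μ hinv (permMat σ) (permMat_unitary σ) _ (measurable_mono x y z w)]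
  rw [mom]
  congr 1
  funext ψ
  unfold mono
  simp only [permMat_mulVec]

lemma mom_diag_eq (hinv : ∀ U ∈ Matrix.unitaryGroup ι ℂ, Measure.map (fun ψ => U.mulVec ψ) μ = μ)
    (x x' : ι) : mom μ x x x x = mom μ x' x' x' x' := by
  have := mom_perm μ hinv (Equiv.swap x x') x x x x
  simpa [Equiv.swap_apply_left] using this

lemma mom_pair_eq (hinv : ∀ U ∈ Matrix.unitaryGroup ι ℂ, Measure.map (fun ψ => U.mulVec ψ) μ = μ)
    (x y x' y' : ι) (hxy : x ≠ y) (hxy' : x' ≠ y') :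
    mom μ x y x y = mom μ x' y' x' y' := by
  set τ := Equiv.swap x x' with hτ
  have hy1 : τ y ≠ x' := by
    intro hc
    apply hxy
    have : τ y = τ x := by rw [hc, hτ, Equiv.swap_apply_left]
    exact (τ.injective this).symm ▸ rfl
  set σ := τ.trans (Equiv.swap (τ y) y') with hσ
  have hx : σ x = x' := by
    simp only [hσ, Equiv.trans_apply, hτ, Equiv.swap_apply_left]
    exact Equiv.swap_apply_of_ne_of_ne hy1.symm hxy'
  have hy : σ y = y' := by
    simp only [hσ, Equiv.trans_apply, Equiv.swap_apply_left]
  have := mom_perm μ hinv σ x y x y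
  rw [this, hx, hy]


noncomputable def rs : ℂ := ((Real.sqrt 2)⁻¹ : ℝ)

lemma rs_conj : (starRingEnd ℂ) rs = rs := Complex.conj_ofReal _

lemma rs_sq : rs * rs = 1/2 := by
  unfold rs
  rw [← Complex.ofReal_mul, ← mul_inv, Real.mul_self_sqrt (by norm_num : (0:ℝ) ≤ 2)]
  norm_num
noncomputable def hadMat (u v : ι) : Matrix ι ι ℂ := fun j k =>
  if j = u then (if k = u then rs else if k = v then rs else 0)
  else if j = v then (if k = u then rs else if k = v then -rs else 0)
  else if k = j then 1 else 0

lemma sum_eval_pair {u v : ι} (huv : u ≠ v) (F : ι → ℂ)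
    (h0 : ∀ k, k ≠ u → k ≠ v → F k = 0) : ∑ k, F k = F u + F v := by
  rw [← Finset.sum_pair huv]
  refine (Finset.sum_subset (Finset.subset_univ _) ?_).symm
  intro k _ hk
  simp only [Finset.mem_insert, Finset.mem_singleton, not_or] at hk
  exact h0 k hk.1 hk.2

lemma hadMat_mulVec {u v : ι} (huv : u ≠ v) (ψ : ι → ℂ) (j : ι) :
    (hadMat u v).mulVec ψ j =
      if j = u then rs * (ψ u + ψ v) else if j = v then rs * (ψ u - ψ v) else ψ j := by
  unfold Matrix.mulVec dotProduct
  by_cases hju : j = u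
  · rw [if_pos hju]
    rw [sum_eval_pair huv _ (fun k hku hkv => by simp [hadMat, hju, hku, hkv])]
    simp [hadMat, hju, huv, Ne.symm huv]
    ring
  · by_cases hjv : j = v
    · rw [if_neg hju, if_pos hjv]
      rw [sum_eval_pair huv _ (fun k hku hkv => by simp [hadMat, hju, hjv, hku, hkv])]
      simp [hadMat, hju, hjv, huv, Ne.symm huv]
      ring
    · rw [if_neg hju, if_neg hjv]
      have hterm : ∀ k : ι, hadMat u v j k * ψ k = if k = j then ψ k else 0 := by
        intro k
        by_cases hkj : k = j
        · simp [hadMat, hju, hjv, hkj]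
        · simp [hadMat, hju, hjv, hkj, fun h : j = k => hkj (h.symm)]
      rw [Finset.sum_congr rfl (fun k _ => hterm k), Finset.sum_ite_eq' Finset.univ j ψ]
      simp



lemma hadMat_unitary {u v : ι} (huv : u ≠ v) : hadMat u v ∈ Matrix.unitaryGroup ι ℂ := by
  rw [Matrix.mem_unitaryGroup_iff]
  ext j l
  simp only [Matrix.mul_apply, Matrix.star_eq_conjTranspose, Matrix.conjTranspose_apply]
  by_cases hju : j = u
  · by_cases hlu : l = u
    · rw [sum_eval_pair huv _ (fun k hku hkv => by simp [hadMat, hju, hlu, hku, hkv])]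
      simp [hadMat, hju, hlu, huv, Ne.symm huv, Matrix.one_apply, Complex.star_def, rs_conj]
      linear_combination 2 * rs_sq
    · by_cases hlv : l = v
      · rw [sum_eval_pair huv _ (fun k hku hkv => by simp [hadMat, hju, hlv, hku, hkv])]
        simp [hadMat, hju, hlv, huv, Ne.symm huv, Matrix.one_apply, Complex.star_def, rs_conj]
      · rw [sum_eval_pair huv _ (fun k hku hkv => by simp [hadMat, hju, hlu, hlv, hku, hkv])]
        simp [hadMat, hju, hlu, hlv, Ne.symm hlu, Ne.symm hlv, huv, Ne.symm huv,
          Matrix.one_apply, Complex.star_def, rs_conj]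
  · by_cases hjv : j = v
    · by_cases hlu : l = u
      · rw [sum_eval_pair huv _ (fun k hku hkv => by simp [hadMat, hjv, hju, hlu, hku, hkv])]
        simp [hadMat, hjv, hju, hlu, huv, Ne.symm huv, Matrix.one_apply, Complex.star_def, rs_conj]
      · by_cases hlv : l = v
        · rw [sum_eval_pair huv _ (fun k hku hkv => by simp [hadMat, hjv, hju, hlv, hku, hkv])]
          simp [hadMat, hjv, hju, hlv, huv, Ne.symm huv, Matrix.one_apply, Complex.star_def,
            rs_conj]
          linear_combination 2 * rs_sq
        · rw [sum_eval_pair huv _ (fun k hku hkv => by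
            simp [hadMat, hju, hjv, hlu, hlv, hku, hkv])]
          simp [hadMat, hju, hjv, hlu, hlv, Ne.symm hlu, Ne.symm hlv, huv, Ne.symm huv,
            Matrix.one_apply, Complex.star_def, rs_conj]
    · by_cases hlu : l = u
      · rw [sum_eval_pair huv _ (fun k hku hkv => by simp [hadMat, hju, hjv, hlu, hku, hkv])]
        simp [hadMat, hju, hjv, hlu, Ne.symm hju, Ne.symm hjv, huv, Ne.symm huv,
          Matrix.one_apply, Complex.star_def, rs_conj]
      · by_cases hlv : l = v
        · rw [sum_eval_pair huv _ (fun k hku hkv => by simp [hadMat, hju, hjv, hlv, hku, hkv])]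
          simp [hadMat, hju, hjv, hlv, Ne.symm hju, Ne.symm hjv, huv, Ne.symm huv,
            Matrix.one_apply, Complex.star_def, rs_conj]
        · have hterm : ∀ k : ι, hadMat u v j k * (starRingEnd ℂ) (hadMat u v l k)
              = if k = j then (starRingEnd ℂ) (hadMat u v l k) else 0 := by
            intro k
            by_cases hkj : k = j
            · simp [hadMat, hju, hjv, hkj]
            · simp [hadMat, hju, hjv, hkj, fun h : j = k => hkj h.symm]
          have : ∀ k : ι, hadMat u v j k * star (hadMat u v l k)
              = if k = j then (starRingEnd ℂ) (hadMat u v l k) else 0 := hterm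
          rw [Finset.sum_congr rfl (fun k _ => this k), Finset.sum_ite_eq' Finset.univ j _]
          by_cases hjl : j = l
          · simp [hadMat, hjl, hlu, hlv, Matrix.one_apply]
          · simp [hadMat, hju, hjv, hlu, hlv, hjl, fun h : l = j => hjl h.symm,
              Matrix.one_apply]

lemma mom_had (hinv : ∀ U ∈ Matrix.unitaryGroup ι ℂ, Measure.map (fun ψ => U.mulVec ψ) μ = μ)
    (hsphere : μ {ψ | ∑ x, ‖ψ x‖ ^ 2 = 1} = 1)
    (u v : ι) (huv : u ≠ v) :
    mom μ u u u u = (1/4) * ∑ q : Fin 2 × Fin 2 × Fin 2 × Fin 2,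
      mom μ (![u,v] q.1) (![u,v] q.2.1) (![u,v] q.2.2.1) (![u,v] q.2.2.2) := by
  have key : ∀ ψ : ι → ℂ, mono u u u u ((hadMat u v).mulVec ψ)
      = (1/4) * ∑ q : Fin 2 × Fin 2 × Fin 2 × Fin 2,
        mono (![u,v] q.1) (![u,v] q.2.1) (![u,v] q.2.2.1) (![u,v] q.2.2.2) ψ := by
    intro ψ
    simp only [mono, hadMat_mulVec huv, eq_self_iff_true, if_true, ite_true, map_mul, rs_conj,
      map_add, Fintype.sum_prod_type, Fin.sum_univ_two, Matrix.cons_val_zero, Matrix.cons_val_one,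
      Matrix.head_cons]
    have h4 : rs * rs * (rs * rs) = 1/4 := by rw [rs_sq]; norm_num
    linear_combination (ψ u + ψ v) * (ψ u + ψ v) * ((starRingEnd ℂ) (ψ u) + (starRingEnd ℂ) (ψ v))
      * ((starRingEnd ℂ) (ψ u) + (starRingEnd ℂ) (ψ v)) * h4
  conv_lhs => rw [mom, integral_comp_unitary μ hinv (hadMat u v) (hadMat_unitary huv) _
    (measurable_mono u u u u)]
  calc ∫ ψ, mono u u u u ((hadMat u v).mulVec ψ) ∂μ
      = ∫ ψ, (1/4) * ∑ q : Fin 2 × Fin 2 × Fin 2 × Fin 2,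
          mono (![u,v] q.1) (![u,v] q.2.1) (![u,v] q.2.2.1) (![u,v] q.2.2.2) ψ ∂μ := by
        congr 1; funext ψ; exact key ψ
    _ = (1/4) * ∑ q : Fin 2 × Fin 2 × Fin 2 × Fin 2,
          mom μ (![u,v] q.1) (![u,v] q.2.1) (![u,v] q.2.2.1) (![u,v] q.2.2.2) := by
        rw [integral_const_mul]
        congr 1
        exact integral_finset_sum _ (fun q _ => integrable_mono μ hsphere _ _ _ _)

lemma mom_bb_eq_two_aa
    (hinv : ∀ U ∈ Matrix.unitaryGroup ι ℂ, Measure.map (fun ψ => U.mulVec ψ) μ = μ)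
    (hsphere : μ {ψ | ∑ x, ‖ψ x‖ ^ 2 = 1} = 1)
    (u v : ι) (huv : u ≠ v) :
    mom μ u u u u = 2 * mom μ u v u v := by
  have h := mom_had μ hinv hsphere u v huv
  rw [Fintype.sum_prod_type] at h
  simp only [Fintype.sum_prod_type, Fin.sum_univ_two, Matrix.cons_val_zero, Matrix.cons_val_one,
    Matrix.head_cons] at h
  have hvu : v ≠ u := Ne.symm huv
  -- zero terms
  have z1 : mom μ u u u v = 0 := mom_zero_3 μ hinv u v hvu
  have z2 : mom μ u u v u = 0 := by rw [mom_comm_right]; exact z1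
  have z3 : mom μ u u v v = 0 := mom_zero_2L μ hinv u u v v hvu hvu
  have z4 : mom μ u v u u = 0 := by
    rw [mom_comm_left]; exact mom_zero_1L μ hinv v u u u huv huv huv
  have z5 : mom μ u v v v = 0 := mom_zero_1L μ hinv u v v v hvu hvu hvu
  have z6 : mom μ v u u u = 0 := mom_zero_1L μ hinv v u u u huv huv huv
  have z7 : mom μ v u v v = 0 := by rw [mom_comm_left]; exact z5
  have z8 : mom μ v v u u = 0 := mom_zero_2L μ hinv v v u u huv huv
  have z9 : mom μ v v u v = 0 := mom_zero_1R μ hinv v v u v hvu hvu hvu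
  have z10 : mom μ v v v u = 0 := by rw [mom_comm_right]; exact z9
  -- equal terms
  have e1 : mom μ u v v u = mom μ u v u v := by rw [mom_comm_right]
  have e2 : mom μ v u u v = mom μ u v u v := by rw [mom_comm_left]
  have e3 : mom μ v u v u = mom μ u v u v := by rw [mom_comm_left, mom_comm_right]
  have e4 : mom μ v v v v = mom μ u u u u := mom_diag_eq μ hinv v u
  rw [z1, z2, z3, z4, z5, z6, z7, z8, z9, z10, e1, e2, e3, e4] at h
  linear_combination 2 * h

lemma mom_norm (hsphere : μ {ψ | ∑ x, ‖ψ x‖ ^ 2 = 1} = 1) :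
    ∑ p : ι × ι, mom μ p.1 p.2 p.1 p.2 = 1 := by
  unfold mom
  rw [← integral_finset_sum _ (fun p _ => integrable_mono μ hsphere _ _ _ _)]
  have : ∫ ψ, (1:ℂ) ∂μ = 1 := by simp
  rw [← this]
  apply integral_congr_ae
  filter_upwards [ae_sphere μ hsphere] with ψ hψ
  have hfact : ∑ p : ι × ι, mono p.1 p.2 p.1 p.2 ψ
      = (∑ x, ψ x * (starRingEnd ℂ) (ψ x)) * (∑ y, ψ y * (starRingEnd ℂ) (ψ y)) := by
    rw [Finset.sum_mul_sum, Fintype.sum_prod_type]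
    congr 1; funext x; congr 1; funext y
    unfold mono; ring
  rw [hfact]
  have hone : (∑ x, ψ x * (starRingEnd ℂ) (ψ x)) = 1 := by
    have : ∀ x : ι, ψ x * (starRingEnd ℂ) (ψ x) = ((‖ψ x‖ ^ 2 : ℝ) : ℂ) := by
      intro x
      rw [Complex.mul_conj, Complex.normSq_eq_norm_sq]
    rw [Finset.sum_congr rfl (fun x _ => this x), ← Complex.ofReal_sum, hψ, Complex.ofReal_one]
  rw [hone, one_mul]

lemma sum_ite_card {α : Type*} [Fintype α] [DecidableEq α] (x : α) (c d : ℂ) :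
    ∑ y : α, (if x = y then c else d) = c + ((Fintype.card α : ℂ) - 1) * d := by
  have hterm : ∀ y : α, (if x = y then c else d) = d + (if y = x then c - d else 0) := by
    intro y
    by_cases h : x = y
    · simp [h]
    · rw [if_neg h, if_neg (fun hc => h hc.symm), add_zero]
  rw [Finset.sum_congr rfl (fun y _ => hterm y), Finset.sum_add_distrib,
    Finset.sum_ite_eq' Finset.univ x (fun _ => c - d)]
  simp [Finset.card_univ, mul_comm]
  ring

lemma sum_ite_zero' {α : Type*} [Fintype α] [DecidableEq α] (x : α) (c : ℂ) :
    ∑ y : α, (if x = y then c else 0) = c := by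
  rw [Finset.sum_congr rfl (fun y _ => by
    rw [show (if x = y then c else 0) = if y = x then c else 0 from by
      by_cases h : x = y
      · simp [h]
      · rw [if_neg h, if_neg (fun hc => h hc.symm)]])]
  rw [Finset.sum_ite_eq' Finset.univ x (fun _ => c)]
  simp



/-- For ρ = |ψ⟩⟨ψ| with ψ Haar-random on the unit sphere of
H_A ⊗ H_Ā (dims d_A, d_Ā), ⟨Tr[(ρ⊗ρ)F_A]⟩ = (d_A + d_Ā)/(d_A d_Ā + 1) and
⟨Tr[ρ⊗ρ]⟩ = 1. -/
theorem stmt12 (dA dB : ℕ)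
    (μ : Measure (Fin dA × Fin dB → ℂ)) [IsProbabilityMeasure μ]
    (hsphere : μ {ψ | ∑ x, ‖ψ x‖ ^ 2 = 1} = 1)
    (hinv : ∀ U ∈ Matrix.unitaryGroup (Fin dA × Fin dB) ℂ,
      Measure.map (fun ψ => U.mulVec ψ) μ = μ)
    (FA : Matrix ((Fin dA × Fin dB) × (Fin dA × Fin dB))
        ((Fin dA × Fin dB) × (Fin dA × Fin dB)) ℂ)
    (hFA : ∀ p q, FA p q =
      if p.1.1 = q.2.1 ∧ p.2.1 = q.1.1 ∧ p.1.2 = q.1.2 ∧ p.2.2 = q.2.2 then 1 else 0) :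
    (∫ ψ, ((((fun x y => ψ x * (starRingEnd ℂ) (ψ y)) :
          Matrix (Fin dA × Fin dB) (Fin dA × Fin dB) ℂ) ⊗ₖ
        ((fun x y => ψ x * (starRingEnd ℂ) (ψ y)) :
          Matrix (Fin dA × Fin dB) (Fin dA × Fin dB) ℂ)) * FA).trace ∂μ)
      = ((dA : ℂ) + (dB : ℂ)) / ((dA : ℂ) * (dB : ℂ) + 1) ∧
    (∫ ψ, ((((fun x y => ψ x * (starRingEnd ℂ) (ψ y)) :
          Matrix (Fin dA × Fin dB) (Fin dA × Fin dB) ℂ) ⊗ₖ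
        ((fun x y => ψ x * (starRingEnd ℂ) (ψ y)) :
          Matrix (Fin dA × Fin dB) (Fin dA × Fin dB) ℂ))).trace ∂μ) = 1 := by

  -- nonemptiness
  have hne : Nonempty (Fin dA × Fin dB) := by
    by_contra h
    rw [not_nonempty_iff] at h
    have hempty : {ψ : Fin dA × Fin dB → ℂ | ∑ x, ‖ψ x‖ ^ 2 = 1} = ∅ := by
      ext ψ
      simp [Finset.univ_eq_empty]
    rw [hempty, measure_empty] at hsphere
    exact zero_ne_one hsphere
  obtain ⟨⟨a0, b0⟩⟩ := hne
  have hdA : 0 < dA := a0.pos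
  have hdB : 0 < dB := b0.pos
  -- pointwise trace identities
  have htr2 : ∀ ψ : Fin dA × Fin dB → ℂ,
      ((((fun x y => ψ x * (starRingEnd ℂ) (ψ y)) : Matrix (Fin dA × Fin dB) (Fin dA × Fin dB) ℂ) ⊗ₖ
        ((fun x y => ψ x * (starRingEnd ℂ) (ψ y)) : Matrix (Fin dA × Fin dB) (Fin dA × Fin dB) ℂ))).trace
      = ∑ P : (Fin dA × Fin dB) × (Fin dA × Fin dB), mono P.1 P.2 P.1 P.2 ψ := by
    intro ψ
    unfold Matrix.trace
    apply Finset.sum_congr rfl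
    intro P _
    simp only [Matrix.diag_apply, Matrix.kroneckerMap_apply, Matrix.kroneckerMap, Matrix.of_apply, mono]
    ring
  have htr1 : ∀ ψ : Fin dA × Fin dB → ℂ,
      (((((fun x y => ψ x * (starRingEnd ℂ) (ψ y)) : Matrix (Fin dA × Fin dB) (Fin dA × Fin dB) ℂ) ⊗ₖ
        ((fun x y => ψ x * (starRingEnd ℂ) (ψ y)) : Matrix (Fin dA × Fin dB) (Fin dA × Fin dB) ℂ)) * FA)).trace
      = ∑ P : (Fin dA × Fin dB) × (Fin dA × Fin dB), mono P.1 P.2 (P.2.1, P.1.2) (P.1.1, P.2.2) ψ := by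
    intro ψ
    unfold Matrix.trace
    apply Finset.sum_congr rfl
    intro P _
    simp only [Matrix.diag_apply, Matrix.mul_apply]
    have hFA' : ∀ Q : (Fin dA × Fin dB) × (Fin dA × Fin dB), FA Q P = if Q = ((P.2.1, P.1.2), (P.1.1, P.2.2)) then 1 else 0 := by
      intro Q
      rw [hFA]
      refine if_congr ?_ rfl rfl
      constructor
      · rintro ⟨h1, h2, h3, h4⟩
        exact Prod.ext (Prod.ext h1 h3) (Prod.ext h2 h4)
      · rintro rfl
        exact ⟨rfl, rfl, rfl, rfl⟩
    rw [Finset.sum_congr rfl (fun Q _ => by rw [hFA' Q])]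
    simp only [mul_ite, mul_one, mul_zero]
    rw [Finset.sum_ite_eq' Finset.univ ((P.2.1, P.1.2), (P.1.1, P.2.2))]
    simp only [Finset.mem_univ, if_true, Matrix.kroneckerMap_apply, Matrix.kroneckerMap, Matrix.of_apply, mono]
    ring
  -- second statement
  have hint2 : (∫ ψ, ((((fun x y => ψ x * (starRingEnd ℂ) (ψ y)) : Matrix (Fin dA × Fin dB) (Fin dA × Fin dB) ℂ) ⊗ₖ
        ((fun x y => ψ x * (starRingEnd ℂ) (ψ y)) : Matrix (Fin dA × Fin dB) (Fin dA × Fin dB) ℂ))).trace ∂μ) = 1 := by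
    calc (∫ ψ, ((((fun x y => ψ x * (starRingEnd ℂ) (ψ y)) : Matrix (Fin dA × Fin dB) (Fin dA × Fin dB) ℂ) ⊗ₖ
        ((fun x y => ψ x * (starRingEnd ℂ) (ψ y)) : Matrix (Fin dA × Fin dB) (Fin dA × Fin dB) ℂ))).trace ∂μ)
        = ∫ ψ, ∑ P : (Fin dA × Fin dB) × (Fin dA × Fin dB), mono P.1 P.2 P.1 P.2 ψ ∂μ := by
          congr 1; funext ψ; exact htr2 ψ
      _ = ∑ P : (Fin dA × Fin dB) × (Fin dA × Fin dB), mom μ P.1 P.2 P.1 P.2 := by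
          rw [integral_finset_sum _ (fun P _ => integrable_mono μ hsphere _ _ _ _)]
          rfl
      _ = 1 := mom_norm μ hsphere
  refine ⟨?_, hint2⟩
  -- first statement
  have hint1 : (∫ ψ, (((((fun x y => ψ x * (starRingEnd ℂ) (ψ y)) : Matrix (Fin dA × Fin dB) (Fin dA × Fin dB) ℂ) ⊗ₖ
        ((fun x y => ψ x * (starRingEnd ℂ) (ψ y)) : Matrix (Fin dA × Fin dB) (Fin dA × Fin dB) ℂ)) * FA)).trace ∂μ)
      = ∑ P : (Fin dA × Fin dB) × (Fin dA × Fin dB), mom μ P.1 P.2 (P.2.1, P.1.2) (P.1.1, P.2.2) := by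
    calc (∫ ψ, (((((fun x y => ψ x * (starRingEnd ℂ) (ψ y)) : Matrix (Fin dA × Fin dB) (Fin dA × Fin dB) ℂ) ⊗ₖ
        ((fun x y => ψ x * (starRingEnd ℂ) (ψ y)) : Matrix (Fin dA × Fin dB) (Fin dA × Fin dB) ℂ)) * FA)).trace ∂μ)
        = ∫ ψ, ∑ P : (Fin dA × Fin dB) × (Fin dA × Fin dB), mono P.1 P.2 (P.2.1, P.1.2) (P.1.1, P.2.2) ψ ∂μ := by
          congr 1; funext ψ; exact htr1 ψ
      _ = ∑ P : (Fin dA × Fin dB) × (Fin dA × Fin dB), mom μ P.1 P.2 (P.2.1, P.1.2) (P.1.1, P.2.2) := by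
          rw [integral_finset_sum _ (fun P _ => integrable_mono μ hsphere _ _ _ _)]
          rfl
  rw [hint1]
  by_cases hd : ∃ u v : Fin dA × Fin dB, u ≠ v
  · obtain ⟨u0, v0, huv0⟩ := hd
    set av := mom μ u0 v0 u0 v0 with hav
    set bv := mom μ u0 u0 u0 u0 with hbv
    have hb2a : bv = 2 * av := mom_bb_eq_two_aa μ hinv hsphere u0 v0 huv0
    -- value of each term
    have hTval : ∀ P : (Fin dA × Fin dB) × (Fin dA × Fin dB),
        mom μ P.1 P.2 (P.2.1, P.1.2) (P.1.1, P.2.2)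
        = if P.1.1 = P.2.1 then (if P.1.2 = P.2.2 then bv else av)
          else (if P.1.2 = P.2.2 then av else 0) := by
      rintro ⟨⟨a1, b1⟩, ⟨a2, b2⟩⟩
      by_cases ha : a1 = a2
      · by_cases hb : b1 = b2
        · subst ha; subst hb
          simp only [if_pos rfl]
          exact mom_diag_eq μ hinv _ u0
        · subst ha
          simp only [if_pos rfl, if_neg hb]
          exact mom_pair_eq μ hinv _ _ u0 v0
            (fun h => hb (congrArg Prod.snd h)) huv0
      · by_cases hb : b1 = b2
        · subst hb
          simp only [if_neg ha, if_pos rfl]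
          rw [mom_comm_right]
          exact mom_pair_eq μ hinv _ _ u0 v0
            (fun h => ha (congrArg Prod.fst h)) huv0
        · simp only [if_neg ha, if_neg hb]
          exact mom_zero_1L μ hinv _ _ _ _
            (fun h => ha (congrArg Prod.fst h).symm)
            (fun h => ha (congrArg Prod.fst h).symm)
            (fun h => hb (congrArg Prod.snd h).symm)
    rw [Finset.sum_congr rfl (fun P _ => hTval P)]
    -- compute the sum
    have hsum : (∑ P : (Fin dA × Fin dB) × (Fin dA × Fin dB),
        (if P.1.1 = P.2.1 then (if P.1.2 = P.2.2 then bv else av)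
          else (if P.1.2 = P.2.2 then av else 0)))
        = (dA : ℂ) * ((dB : ℂ) * ((bv + ((dB : ℂ) - 1) * av) + ((dA : ℂ) - 1) * av)) := by
      rw [Fintype.sum_prod_type]
      have hxy : ∀ x : Fin dA × Fin dB, (∑ y : Fin dA × Fin dB,
          (if x.1 = y.1 then (if x.2 = y.2 then bv else av)
            else (if x.2 = y.2 then av else 0)))
          = (bv + ((dB : ℂ) - 1) * av) + ((dA : ℂ) - 1) * av := by
        rintro ⟨a1, b1⟩
        rw [Fintype.sum_prod_type]
        have hinner : ∀ a2 : Fin dA, (∑ b2 : Fin dB,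
            (if a1 = a2 then (if b1 = b2 then bv else av) else (if b1 = b2 then av else 0)))
            = if a1 = a2 then bv + ((dB : ℂ) - 1) * av else av := by
          intro a2
          by_cases h : a1 = a2
          · simp only [if_pos h]
            rw [sum_ite_card b1 bv av, Fintype.card_fin]
          · simp only [if_neg h]
            rw [sum_ite_zero' b1 av]
        rw [Finset.sum_congr rfl (fun a2 _ => hinner a2), sum_ite_card a1 _ av,
          Fintype.card_fin]
      rw [Finset.sum_congr rfl (fun x _ => hxy x), Finset.sum_const, Finset.card_univ,
        Fintype.card_prod, Fintype.card_fin, Fintype.card_fin, nsmul_eq_mul]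
      push_cast
      ring
    rw [hsum]
    -- normalization
    have hnorm := mom_norm μ hsphere
    have hdiagval : ∀ p : (Fin dA × Fin dB) × (Fin dA × Fin dB),
        mom μ p.1 p.2 p.1 p.2 = if p.1 = p.2 then bv else av := by
      rintro ⟨p1, p2⟩
      by_cases h : p1 = p2
      · subst h; simp only [if_pos rfl]; exact mom_diag_eq μ hinv _ u0
      · simp only [if_neg h]; exact mom_pair_eq μ hinv _ _ u0 v0 h huv0
    rw [Finset.sum_congr rfl (fun p _ => hdiagval p)] at hnorm
    rw [Fintype.sum_prod_type] at hnorm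
    rw [Finset.sum_congr rfl (fun p1 _ => sum_ite_card p1 bv av)] at hnorm
    rw [Finset.sum_const, Finset.card_univ, Fintype.card_prod, Fintype.card_fin,
      Fintype.card_fin, nsmul_eq_mul] at hnorm
    push_cast at hnorm
    -- final arithmetic
    have hNne : ((dA : ℂ) * (dB : ℂ) + 1) ≠ 0 := by
      have h0 : ((dA * dB + 1 : ℕ) : ℂ) ≠ 0 := Nat.cast_ne_zero.mpr (by omega)
      push_cast at h0
      exact h0
    rw [eq_div_iff hNne]
    linear_combination ((dA : ℂ) + (dB : ℂ)) * hnorm +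
      ((dA : ℂ) * (dB : ℂ) * ((dA : ℂ) * (dB : ℂ) + 1) -
        ((dA : ℂ) + (dB : ℂ)) * ((dA : ℂ) * (dB : ℂ))) * hb2a
  · push_neg at hd
    have hA1 : dA = 1 := by
      by_contra h
      have h2 : 2 ≤ dA := by omega
      have := hd (⟨0, by omega⟩, b0) (⟨1, by omega⟩, b0)
      have := congrArg Prod.fst this
      simp at this
    have hB1 : dB = 1 := by
      by_contra h
      have h2 : 2 ≤ dB := by omega
      have := hd (a0, ⟨0, by omega⟩) (a0, ⟨1, by omega⟩)
      have := congrArg Prod.snd this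
      simp at this
    subst hA1; subst hB1
    have hcollapse : ∀ P : (Fin 1 × Fin 1) × (Fin 1 × Fin 1),
        mom μ P.1 P.2 (P.2.1, P.1.2) (P.1.1, P.2.2) = mom μ P.1 P.2 P.1 P.2 := by
      intro P
      congr 1 <;> [exact Subsingleton.elim _ _; exact Subsingleton.elim _ _]
    rw [Finset.sum_congr rfl (fun P _ => hcollapse P), mom_norm μ hsphere]
    norm_num
end

section
/- Let p_α = e^{S_α}/∑_β e^{S_β} for a finite index set and reals S_α, and suppose |S_α| ≤ ε for all α, where the index set has D elements. Then the entropy F = -∑_α p_α log p_α + ∑_α p_α S_α = log ∑_α e^{S_α} satisfies |F - (log D + D^{-1} ∑_α S_α)| ≤ 2ε². -/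
/-- For the Gibbs distribution p_α = e^{S_α}/∑ e^{S_β} with
|S_α| ≤ ε ≤ 1 on a set of cardinality D, the maximal entropy
F = log ∑ e^{S_α} satisfies |F - (log D + D⁻¹ ∑ S_α)| ≤ 2ε². -/
theorem stmt18 {ι : Type*} [Fintype ι] [Nonempty ι] (S : ι → ℝ) (ε : ℝ)
    (hε : ε ≤ 1) (hS : ∀ a, |S a| ≤ ε) :
    |Real.log (∑ a, Real.exp (S a)) -
        (Real.log (Fintype.card ι) + (Fintype.card ι : ℝ)⁻¹ * ∑ a, S a)|
      ≤ 2 * ε ^ 2 := by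
  set D : ℝ := (Fintype.card ι : ℝ) with hDdef
  have hD : 0 < D := by
    have := Fintype.card_pos (α := ι)
    rw [hDdef]; exact_mod_cast this
  set T : ℝ := ∑ a, Real.exp (S a) with hTdef
  have hT : 0 < T := Finset.sum_pos (fun a _ => Real.exp_pos _) Finset.univ_nonempty
  set m : ℝ := D⁻¹ * ∑ a, S a with hmdef
  have hcard : ∑ _a : ι, D⁻¹ = 1 := by
    rw [Finset.sum_const, Finset.card_univ, nsmul_eq_mul]
    field_simp
    exact hDdef.symm
  -- Jensen: exp m ≤ T / D
  have hjensen : Real.exp m ≤ D⁻¹ * T := by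
    have := convexOn_exp.map_sum_le (t := Finset.univ) (w := fun _ : ι => D⁻¹)
      (p := S) (fun _ _ => by positivity) hcard (fun _ _ => Set.mem_univ _)
    simp only [smul_eq_mul] at this
    calc Real.exp m = Real.exp (∑ a, D⁻¹ * S a) := by
          rw [hmdef, Finset.mul_sum]
      _ ≤ ∑ a, D⁻¹ * Real.exp (S a) := this
      _ = D⁻¹ * T := by rw [hTdef, Finset.mul_sum]
  have key : Real.log T - (Real.log D + m) = Real.log (D⁻¹ * T) - m := by
    rw [Real.log_mul (by positivity) hT.ne', Real.log_inv]
    ring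
  have hε0 : 0 ≤ ε := le_trans (abs_nonneg _) (hS (Classical.arbitrary ι))
  rw [key]
  have hlow : 0 ≤ Real.log (D⁻¹ * T) - m := by
    have := Real.log_le_log (Real.exp_pos m) hjensen
    rw [Real.log_exp] at this
    linarith
  have hup : Real.log (D⁻¹ * T) - m ≤ ε ^ 2 := by
    have h1 : Real.log (D⁻¹ * T) ≤ D⁻¹ * T - 1 :=
      Real.log_le_sub_one_of_pos (by positivity)
    have h2 : D⁻¹ * T - 1 - m ≤ ε ^ 2 := by
      have hsum : ∀ a : ι, Real.exp (S a) - 1 - S a ≤ ε ^ 2 := by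
        intro a
        have hb := Real.abs_exp_sub_one_sub_id_le (le_trans (hS a) hε)
        have : (S a) ^ 2 ≤ ε ^ 2 := by
          have := sq_abs (S a)
          nlinarith [hS a, abs_nonneg (S a)]
        calc Real.exp (S a) - 1 - S a ≤ |Real.exp (S a) - 1 - S a| := le_abs_self _
          _ ≤ (S a) ^ 2 := hb
          _ ≤ ε ^ 2 := this
      have hsum' : ∑ a, (Real.exp (S a) - 1 - S a) ≤ ∑ _a : ι, ε ^ 2 :=
        Finset.sum_le_sum fun a _ => hsum a
      have hexpand : ∑ a, (Real.exp (S a) - 1 - S a) = T - D - ∑ a, S a := by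
        rw [hTdef]
        simp [Finset.sum_sub_distrib, hDdef, Finset.card_univ]
      have hconst : ∑ _a : ι, ε ^ 2 = D * ε ^ 2 := by
        simp [hDdef, Finset.card_univ, mul_comm]
      rw [hexpand, hconst] at hsum'
      have : D⁻¹ * (T - D - ∑ a, S a) ≤ D⁻¹ * (D * ε ^ 2) := by
        apply mul_le_mul_of_nonneg_left hsum' (by positivity)
      rw [mul_sub, mul_sub, inv_mul_cancel₀ hD.ne', ← mul_assoc,
        inv_mul_cancel₀ hD.ne', one_mul] at this
      rw [hmdef]; linarith
    linarith
  rw [abs_of_nonneg hlow]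
  nlinarith
end
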